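/- arXiv:math/0505067 — 5 statements merged into one kernel-verified Lean document; each statement's English description precedes it below -/
import Mathlib

section
/- Let α_1,…,α_{n−1}, β_1,…,β_{n−1} be any integers with h_i = α_i d_i + β_i f_i for all i = 1,…,n−1. Then the common zero set in K^{2n} of the n+1 binomials F_1,…,F_{n−1}, F, G is exactly V; that is, a point (x_1,…,x_n,y_1,…,y_n) ∈ K^{2n} satisfies F_1 = ⋯ = F_{n−1} = F = G = 0 if and only if it lies in the image of φ. -/
open MvPolynomial

/-- The parametrization map `φ : K^n → K^{2n}` of the toric variety `V`. -/
noncomputable def phiMap {K : Type*} [Field K] (n : ℕ)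
    (d f g h : Fin (n - 1) → ℕ) (u : Fin n → K) : Fin n ⊕ Fin n → K :=
  Sum.elim
    (fun i => if hi : i.1 < n - 1 then u i ^ d ⟨i.1, hi⟩ else u i)
    (fun i =>
      if hi : i.1 < n - 1 then
        u i ^ f ⟨i.1, hi⟩ * u ⟨n - 1, by have := i.isLt; omega⟩ ^ g ⟨i.1, hi⟩
      else ∏ j : Fin (n - 1), u (Fin.castLE (by omega) j) ^ h j)

/-- The last index of `Fin n` (corresponding to the variables `x_n`, `y_n`). -/
def lastIdx (n : ℕ) (hn : 0 < n) : Fin n := ⟨n - 1, by omega⟩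

/-- `F_i = y_i^{d_i} - x_i^{f_i} x_n^{d_i g_i}`. -/
noncomputable def Fi (K : Type*) [Field K] (n : ℕ) (hn : 0 < n)
    (d f g : Fin (n - 1) → ℕ) (i : Fin (n - 1)) : MvPolynomial (Fin n ⊕ Fin n) K :=
  X (Sum.inr (Fin.castLE (by omega) i)) ^ d i
    - X (Sum.inl (Fin.castLE (by omega) i)) ^ f i
        * X (Sum.inl (lastIdx n hn)) ^ (d i * g i)

/-- `F = y_n^D - x_1^{h_1 D/d_1} ⋯ x_{n-1}^{h_{n-1} D/d_{n-1}}` where `D = d_1 ⋯ d_{n-1}`. -/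
noncomputable def Fbig (K : Type*) [Field K] (n : ℕ) (hn : 0 < n)
    (d h : Fin (n - 1) → ℕ) : MvPolynomial (Fin n ⊕ Fin n) K :=
  X (Sum.inr (lastIdx n hn)) ^ (∏ j, d j)
    - ∏ i : Fin (n - 1),
        X (Sum.inl (Fin.castLE (by omega) i)) ^ (h i * ((∏ j, d j) / d i))

/-- `G = x_n^{(-c)⁺} ∏_{αᵢ ≥ 0} x_i^{α_i} ∏_{βᵢ ≥ 0} y_i^{β_i}
        - y_n x_n^{c⁺} ∏_{αᵢ < 0} x_i^{-α_i} ∏_{βᵢ < 0} y_i^{-β_i}`,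
where `c = ∑ β_i g_i`. -/
noncomputable def Gpoly (K : Type*) [Field K] (n : ℕ) (hn : 0 < n)
    (g : Fin (n - 1) → ℕ) (α β : Fin (n - 1) → ℤ) : MvPolynomial (Fin n ⊕ Fin n) K :=
  X (Sum.inl (lastIdx n hn)) ^ (-(∑ i, β i * g i)).toNat
      * (∏ i : Fin (n - 1), X (Sum.inl (Fin.castLE (by omega) i)) ^ (α i).toNat)
      * (∏ i : Fin (n - 1), X (Sum.inr (Fin.castLE (by omega) i)) ^ (β i).toNat)
    - X (Sum.inr (lastIdx n hn))
      * X (Sum.inl (lastIdx n hn)) ^ (∑ i, β i * g i).toNat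
      * (∏ i : Fin (n - 1), X (Sum.inl (Fin.castLE (by omega) i)) ^ (-(α i)).toNat)
      * (∏ i : Fin (n - 1), X (Sum.inr (Fin.castLE (by omega) i)) ^ (-(β i)).toNat)

/-!
Each equation `F_i = 0` with `gcd(d_i, f_i) = 1` yields `u_i` with `u_i ^ d_i = x_i` and
`y_i = u_i ^ f_i x_n ^ g_i`; then `F = 0` says `y_n = ε ∏ u_i ^ h_i` for a `D`-th root of
unity `ε`. If `x_n ≠ 0` and `∏ u_i ^ h_i ≠ 0`, all coordinates are nonzero, and `G = 0` forces
`ε = 1`: since `h_i = α_i d_i + β_i f_i`, at such a point `G = (∏ u_i ^ h_i - y_n) m` for a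
nonzero monomial `m`. If `x_n = 0`, all `y_i` vanish and each `u_i` may be multiplied by a
`d_i`-th root of unity `η_i`; as the `d_i` are pairwise coprime and prime to the `h_i`, the `η_i`
can be chosen with `∏ η_i ^ h_i = ε`.
-/

open Finset Function

section RootsOfUnity

variable {M : Type*}

theorem exists_pow_eq_one_and_pow_eq_of_coprime [Monoid M] {ζ : M} {m e : ℕ}
    (hζ : ζ ^ m = 1) (hme : m.Coprime e) : ∃ η : M, η ^ m = 1 ∧ η ^ e = ζ := by
  obtain ⟨k, hk⟩ := exists_pow_eq_self_of_coprime
    (hme.symm.coprime_dvd_right (orderOf_dvd_of_pow_eq_one hζ))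
  exact ⟨ζ ^ k, by rw [pow_right_comm, hζ, one_pow], by rwa [pow_right_comm]⟩

theorem exists_mul_eq_of_pow_mul_eq_one [CommMonoid M] {ε : M} {a b : ℕ} (hab : a.Coprime b)
    (hε : ε ^ (a * b) = 1) : ∃ ε₁ ε₂ : M, ε₁ ^ a = 1 ∧ ε₂ ^ b = 1 ∧ ε₁ * ε₂ = ε := by
  obtain ⟨k, hka, hkb⟩ := Nat.chineseRemainder hab 0 1
  obtain ⟨l, hla, hlb⟩ := Nat.chineseRemainder hab 1 0
  have pow_eq_one {c : ℕ} (hc : a * b ∣ c) : ε ^ c = 1 := by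
    obtain ⟨q, rfl⟩ := hc; rw [pow_mul, hε, one_pow]
  refine ⟨ε ^ l, ε ^ k, ?_, ?_, ?_⟩
  · rw [← pow_mul]
    exact pow_eq_one (mul_comm b a ▸ Nat.mul_dvd_mul_right (Nat.modEq_zero_iff_dvd.mp hlb) a)
  · rw [← pow_mul]
    exact pow_eq_one (Nat.mul_dvd_mul_right (Nat.modEq_zero_iff_dvd.mp hka) b)
  · have hkl : l + k ≡ 1 [MOD a * b] :=
      (Nat.modEq_and_modEq_iff_modEq_mul hab).mp
        ⟨by simpa using hla.add hka, by simpa using hlb.add hkb⟩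
    rw [← pow_add, pow_eq_pow_mod _ hε, hkl, ← pow_eq_pow_mod _ hε, pow_one]

theorem exists_prod_pow_eq_of_pow_prod_eq_one [CommMonoid M] {ι : Type*} (s : Finset ι)
    {d h : ι → ℕ} (hdd : (s : Set ι).Pairwise (Nat.Coprime on d))
    (hdh : ∀ i ∈ s, (d i).Coprime (h i)) {ε : M} (hε : ε ^ ∏ i ∈ s, d i = 1) :
    ∃ η : ι → M, (∀ i ∈ s, η i ^ d i = 1) ∧ ∏ i ∈ s, η i ^ h i = ε := by
  classical
  induction s using Finset.induction_on generalizing ε with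
  | empty => exact ⟨1, by simp, by simpa using hε.symm⟩
  | @insert a s ha ih =>
    rw [prod_insert ha] at hε
    have hcop : (d a).Coprime (∏ i ∈ s, d i) := Nat.Coprime.prod_right fun i hi =>
      hdd (mem_insert_self a s) (mem_insert_of_mem hi) (ne_of_mem_of_not_mem hi ha).symm
    obtain ⟨ε₁, ε₂, hε₁, hε₂, rfl⟩ := exists_mul_eq_of_pow_mul_eq_one hcop hε
    obtain ⟨ηa, hηa, hηa'⟩ :=
      exists_pow_eq_one_and_pow_eq_of_coprime hε₁ (hdh a (mem_insert_self a s))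
    obtain ⟨η, hη, hη'⟩ :=
      ih (hdd.mono (by simp)) (fun i hi => hdh i (mem_insert_of_mem hi)) hε₂
    refine ⟨Function.update η a ηa, ?_, ?_⟩
    · rintro i hi
      rcases eq_or_ne i a with rfl | hia
      · simpa
      · simpa [hia] using hη i ((mem_insert.mp hi).resolve_left hia)
    · rw [prod_insert ha, Function.update_self, hηa', ← hη']
      congr 1
      exact prod_congr rfl fun i hi => by rw [Function.update_of_ne (ne_of_mem_of_not_mem hi ha)]

end RootsOfUnity

theorem exists_pow_eq_one_and_eq_mul_of_pow_eq_pow {G₀ : Type*} [CommGroupWithZero G₀]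
    {y w : G₀} {d : ℕ} (hd : d ≠ 0) (h : y ^ d = w ^ d) : ∃ ζ : G₀, ζ ^ d = 1 ∧ y = ζ * w := by
  rcases eq_or_ne w 0 with rfl | hw
  · exact ⟨1, one_pow d, by simpa [hd] using h⟩
  · exact ⟨y / w, by rw [div_pow, h, div_self (pow_ne_zero d hw)], (div_mul_cancel₀ y hw).symm⟩

theorem exists_pow_eq_and_eq_pow_mul_of_coprime {K : Type*} [Field K] [IsAlgClosed K]
    {x y c : K} {d f : ℕ} (hd : 0 < d) (hdf : d.Coprime f) (h : y ^ d = x ^ f * c ^ d) :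
    ∃ u : K, u ^ d = x ∧ y = u ^ f * c := by
  obtain ⟨v, rfl⟩ := IsAlgClosed.exists_pow_nat_eq x hd
  obtain ⟨ζ, hζ, rfl⟩ := exists_pow_eq_one_and_eq_mul_of_pow_eq_pow (w := v ^ f * c) hd.ne'
    (by rw [h, mul_pow, pow_right_comm])
  obtain ⟨η, hη, rfl⟩ := exists_pow_eq_one_and_pow_eq_of_coprime hζ hdf
  exact ⟨η * v, by rw [mul_pow, hη, one_mul], by ring⟩

section Monomials

variable {M ι : Type*} [CommMonoid M] [Fintype ι]

theorem prod_pow_pow_prod (u : ι → M) (d h : ι → ℕ) :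
    (∏ i, u i ^ h i) ^ (∏ j, d j) = ∏ i, (u i ^ d i) ^ (h i * ((∏ j, d j) / d i)) := by
  rw [← prod_pow]
  refine prod_congr rfl fun i _ => ?_
  rw [← pow_mul, ← pow_mul, mul_left_comm, Nat.mul_div_cancel' (dvd_prod_of_mem d (mem_univ i))]

theorem prod_pow_mul_pow_pow (a : ι → M) (b : M) (p q k : ι → ℕ) :
    ∏ i, (a i ^ p i * b ^ q i) ^ k i = (∏ i, a i ^ (p i * k i)) * b ^ ∑ i, q i * k i := by
  simp only [mul_pow, ← pow_mul, prod_mul_distrib, prod_pow_eq_pow_sum]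

def gPlus (g : ι → ℕ) (α β : ι → ℤ) (x y : ι → M) (xn : M) : M :=
  xn ^ (-∑ i, β i * g i).toNat * (∏ i, x i ^ (α i).toNat) * ∏ i, y i ^ (β i).toNat

def gMinus (g : ι → ℕ) (α β : ι → ℤ) (x y : ι → M) (xn : M) : M :=
  xn ^ (∑ i, β i * g i).toNat * (∏ i, x i ^ (-α i).toNat) * ∏ i, y i ^ (-β i).toNat

theorem gPlus_param_eq {d f g h : ι → ℕ} {α β : ι → ℤ}
    (hbez : ∀ i, (h i : ℤ) = α i * d i + β i * f i) (u : ι → M) (xn : M) :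
    gPlus g α β (fun i => u i ^ d i) (fun i => u i ^ f i * xn ^ g i) xn
      = (∏ i, u i ^ h i) *
          gMinus g α β (fun i => u i ^ d i) (fun i => u i ^ f i * xn ^ g i) xn := by
  have toNat_eq (z : ℤ) : (z.toNat : ℤ) = z + (-z).toNat := by omega
  have hu : ∀ i, d i * (α i).toNat + f i * (β i).toNat
      = h i + (d i * (-α i).toNat + f i * (-β i).toNat) := fun i => by
    zify; rw [toNat_eq (α i), toNat_eq (β i), hbez]; ring
  have hxn : (-∑ i, β i * g i).toNat + ∑ i, g i * (β i).toNat
      = (∑ i, β i * g i).toNat + ∑ i, g i * (-β i).toNat := by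
    zify; simp only [toNat_eq (β _), toNat_eq (∑ i, β i * g i), mul_add, sum_add_distrib]
    rw [sum_congr rfl fun i _ => mul_comm (g i : ℤ) (β i)]
    ring
  simp only [gPlus, gMinus, ← pow_mul, prod_pow_mul_pow_pow]
  calc _ = xn ^ ((-∑ i, β i * g i).toNat + ∑ i, g i * (β i).toNat)
          * ∏ i, u i ^ (d i * (α i).toNat + f i * (β i).toNat) := by
        simp only [pow_add, prod_mul_distrib]; ac_rfl
    _ = xn ^ ((∑ i, β i * g i).toNat + ∑ i, g i * (-β i).toNat)
          * ∏ i, u i ^ (h i + (d i * (-α i).toNat + f i * (-β i).toNat)) := by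
        simp only [hxn, hu]
    _ = _ := by simp only [pow_add, prod_mul_distrib]; ac_rfl

end Monomials

section Binomials

variable {K ι : Type*} [Field K] [Fintype ι] {d f g h : ι → ℕ} {α β : ι → ℤ}

theorem gMinus_ne_zero {x y : ι → K} {xn : K} (hx : ∀ i, x i ≠ 0) (hy : ∀ i, y i ≠ 0)
    (hxn : xn ≠ 0) : gMinus g α β x y xn ≠ 0 := by
  simp [gMinus, prod_ne_zero_iff, *]

theorem exists_param_of_binomials [IsAlgClosed K] (hd : ∀ i, 0 < d i) (hg : ∀ i, 0 < g i)
    (hh : ∀ i, 0 < h i) (hdf : ∀ i, (d i).Coprime (f i)) (hdh : ∀ i, (d i).Coprime (h i))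
    (hdd : Pairwise (Nat.Coprime on d)) (hbez : ∀ i, (h i : ℤ) = α i * d i + β i * f i)
    {x y : ι → K} {xn yn : K}
    (hF : ∀ i, y i ^ d i = x i ^ f i * xn ^ (d i * g i))
    (hFbig : yn ^ ∏ j, d j = ∏ i, x i ^ (h i * ((∏ j, d j) / d i)))
    (hG : gPlus g α β x y xn = yn * gMinus g α β x y xn) :
    ∃ u : ι → K, (∀ i, u i ^ d i = x i) ∧ (∀ i, y i = u i ^ f i * xn ^ g i) ∧
      yn = ∏ i, u i ^ h i := by
  choose u hux huy using fun i => exists_pow_eq_and_eq_pow_mul_of_coprime (c := xn ^ g i)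
    (hd i) (hdf i) (by rw [hF i, pow_mul'])
  obtain rfl : x = fun i => u i ^ d i := funext fun i => (hux i).symm
  obtain rfl : y = fun i => u i ^ f i * xn ^ g i := funext huy
  obtain ⟨ε, hε, rfl⟩ := exists_pow_eq_one_and_eq_mul_of_pow_eq_pow
    (prod_ne_zero_iff.mpr fun i _ => (hd i).ne') (hFbig.trans (prod_pow_pow_prod u d h).symm)
  rcases eq_or_ne xn 0 with rfl | hxn
  · obtain ⟨η, hη, hηε⟩ := exists_prod_pow_eq_of_pow_prod_eq_one univ (hdd.set_pairwise _)
      (fun i _ => hdh i) hε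
    refine ⟨fun i => η i * u i, fun i => by rw [mul_pow, hη i (mem_univ i), one_mul],
      fun i => ?_, ?_⟩
    · simp [zero_pow (hg i).ne']
    · simp only [mul_pow, prod_mul_distrib, hηε]
  · refine ⟨u, fun i => rfl, fun i => rfl, ?_⟩
    rcases eq_or_ne (∏ i, u i ^ h i) 0 with ht | ht
    · rw [ht, mul_zero]
    have hu : ∀ i, u i ≠ 0 := fun i hi =>
      ht (prod_eq_zero (mem_univ i) (by rw [hi, zero_pow (hh i).ne']))
    rw [gPlus_param_eq hbez] at hG
    exact (mul_right_cancel₀ (gMinus_ne_zero (fun i => pow_ne_zero _ (hu i))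
      (fun i => mul_ne_zero (pow_ne_zero _ (hu i)) (pow_ne_zero _ hxn)) hxn) hG).symm

theorem binomials_iff_exists_param [IsAlgClosed K] (hd : ∀ i, 0 < d i) (hg : ∀ i, 0 < g i)
    (hh : ∀ i, 0 < h i) (hdf : ∀ i, (d i).Coprime (f i)) (hdh : ∀ i, (d i).Coprime (h i))
    (hdd : Pairwise (Nat.Coprime on d)) (hbez : ∀ i, (h i : ℤ) = α i * d i + β i * f i)
    {x y : ι → K} {xn yn : K} :
    ((∀ i, y i ^ d i = x i ^ f i * xn ^ (d i * g i)) ∧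
        yn ^ ∏ j, d j = ∏ i, x i ^ (h i * ((∏ j, d j) / d i)) ∧
        gPlus g α β x y xn = yn * gMinus g α β x y xn) ↔
      ∃ u : ι → K, (∀ i, u i ^ d i = x i) ∧ (∀ i, y i = u i ^ f i * xn ^ g i) ∧
        yn = ∏ i, u i ^ h i := by
  refine ⟨fun ⟨hF, hFbig, hG⟩ =>
    exists_param_of_binomials hd hg hh hdf hdh hdd hbez hF hFbig hG, ?_⟩
  rintro ⟨u, hux, huy, rfl⟩
  obtain rfl : x = fun i => u i ^ d i := funext fun i => (hux i).symm
  obtain rfl : y = fun i => u i ^ f i * xn ^ g i := funext huy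
  exact ⟨fun i => by ring, prod_pow_pow_prod u d h, gPlus_param_eq hbez u xn⟩

end Binomials

section Coordinates

variable {K : Type*} [Field K] {n : ℕ} {d f g h : Fin (n - 1) → ℕ}

theorem exists_castLE_or_eq_lastIdx (hn : 0 < n) (j : Fin n) :
    (∃ i : Fin (n - 1), Fin.castLE (Nat.sub_le n 1) i = j) ∨ j = lastIdx n hn := by
  by_cases hj : j.1 < n - 1
  · exact .inl ⟨⟨j, hj⟩, rfl⟩
  · exact .inr (Fin.ext (by simp only [lastIdx]; omega))

theorem phiMap_inl_castLE (v : Fin n → K) (i : Fin (n - 1)) :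
    phiMap n d f g h v (.inl (Fin.castLE (Nat.sub_le n 1) i))
      = v (Fin.castLE (Nat.sub_le n 1) i) ^ d i := by
  simp [phiMap]

theorem phiMap_inl_lastIdx (v : Fin n → K) (hn : 0 < n) :
    phiMap n d f g h v (.inl (lastIdx n hn)) = v (lastIdx n hn) := by
  simp [phiMap, lastIdx]

theorem phiMap_inr_castLE (v : Fin n → K) (hn : 0 < n) (i : Fin (n - 1)) :
    phiMap n d f g h v (.inr (Fin.castLE (Nat.sub_le n 1) i))
      = v (Fin.castLE (Nat.sub_le n 1) i) ^ f i * v (lastIdx n hn) ^ g i := by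
  simp [phiMap, lastIdx]

theorem phiMap_inr_lastIdx (v : Fin n → K) (hn : 0 < n) :
    phiMap n d f g h v (.inr (lastIdx n hn))
      = ∏ i, v (Fin.castLE (Nat.sub_le n 1) i) ^ h i := by
  simp [phiMap, lastIdx]

theorem mem_range_phiMap_iff (hn : 0 < n) {w : Fin n ⊕ Fin n → K} :
    w ∈ Set.range (phiMap n d f g h) ↔ ∃ u : Fin (n - 1) → K,
      (∀ i, u i ^ d i = w (.inl (Fin.castLE (Nat.sub_le n 1) i))) ∧
      (∀ i, w (.inr (Fin.castLE (Nat.sub_le n 1) i))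
        = u i ^ f i * w (.inl (lastIdx n hn)) ^ g i) ∧
      w (.inr (lastIdx n hn)) = ∏ i, u i ^ h i := by
  constructor
  · rintro ⟨v, rfl⟩
    exact ⟨fun i => v (Fin.castLE (Nat.sub_le n 1) i), fun i => (phiMap_inl_castLE v i).symm,
      fun i => by rw [phiMap_inr_castLE v hn, phiMap_inl_lastIdx v hn],
      phiMap_inr_lastIdx v hn⟩
  · rintro ⟨u, hx, hy, hyn⟩
    let v : Fin n → K := fun j =>
      if hj : j.1 < n - 1 then u ⟨j, hj⟩ else w (.inl (lastIdx n hn))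
    have hv : ∀ i, v (Fin.castLE (Nat.sub_le n 1) i) = u i := fun i => dif_pos i.isLt
    have hv_last : v (lastIdx n hn) = w (.inl (lastIdx n hn)) := dif_neg (by simp [lastIdx])
    refine ⟨v, funext fun j => ?_⟩
    rcases j with j | j <;> rcases exists_castLE_or_eq_lastIdx hn j with ⟨i, rfl⟩ | rfl
    · rw [phiMap_inl_castLE, hv, hx]
    · rw [phiMap_inl_lastIdx, hv_last]
    · rw [phiMap_inr_castLE v hn, hv, hv_last, hy]
    · simp only [phiMap_inr_lastIdx v hn, hv, hyn]

theorem eval_Fi (hn : 0 < n) (w : Fin n ⊕ Fin n → K) (i : Fin (n - 1)) :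
    eval w (Fi K n hn d f g i) = w (.inr (Fin.castLE (Nat.sub_le n 1) i)) ^ d i
      - w (.inl (Fin.castLE (Nat.sub_le n 1) i)) ^ f i
        * w (.inl (lastIdx n hn)) ^ (d i * g i) := by
  simp [Fi]

theorem eval_Fbig (hn : 0 < n) (w : Fin n ⊕ Fin n → K) :
    eval w (Fbig K n hn d h) = w (.inr (lastIdx n hn)) ^ (∏ j, d j)
      - ∏ i, w (.inl (Fin.castLE (Nat.sub_le n 1) i)) ^ (h i * ((∏ j, d j) / d i)) := by
  simp [Fbig]

theorem eval_Gpoly (hn : 0 < n) (α β : Fin (n - 1) → ℤ) (w : Fin n ⊕ Fin n → K) :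
    eval w (Gpoly K n hn g α β) =
      gPlus g α β (fun i => w (.inl (Fin.castLE (Nat.sub_le n 1) i)))
          (fun i => w (.inr (Fin.castLE (Nat.sub_le n 1) i))) (w (.inl (lastIdx n hn)))
        - w (.inr (lastIdx n hn)) *
          gMinus g α β (fun i => w (.inl (Fin.castLE (Nat.sub_le n 1) i)))
            (fun i => w (.inr (Fin.castLE (Nat.sub_le n 1) i))) (w (.inl (lastIdx n hn))) := by
  simp only [Gpoly, gPlus, gMinus, map_sub, map_mul, map_pow, map_prod, eval_X, mul_assoc]

end Coordinates

/-- The common zero set in `K^{2n}` of the `n + 1` binomials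
`F_1, …, F_{n-1}, F, G` is exactly `V`. -/
theorem toric_zero_set_of_explicit_binomials
    (K : Type*) [Field K] [IsAlgClosed K]
    (n : ℕ) (hn : 3 ≤ n)
    (d f g h : Fin (n - 1) → ℕ)
    (hd : ∀ i, 0 < d i) (hg : ∀ i, 0 < g i) (hh : ∀ i, 0 < h i)
    (hdf : ∀ i, Nat.Coprime (d i) (f i))
    (hdh : ∀ i, Nat.Coprime (d i) (h i))
    (hdd : ∀ i j, i ≠ j → Nat.Coprime (d i) (d j))
    (α β : Fin (n - 1) → ℤ)
    (hbez : ∀ i, (h i : ℤ) = α i * d i + β i * f i) :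
    ∀ w : Fin n ⊕ Fin n → K,
      ((∀ i : Fin (n - 1), MvPolynomial.eval w (Fi K n (by omega) d f g i) = 0) ∧
        MvPolynomial.eval w (Fbig K n (by omega) d h) = 0 ∧
        MvPolynomial.eval w (Gpoly K n (by omega) g α β) = 0)
      ↔ w ∈ Set.range (phiMap n d f g h) := by
  intro w
  rw [mem_range_phiMap_iff (by omega)]
  simp only [eval_Fi, eval_Fbig, eval_Gpoly, sub_eq_zero]
  exact binomials_iff_exists_param hd hg hh hdf hdh (fun i j hij => hdd i j hij) hbez
end

section
/- Let W = {(u_1,…,u_n) ∈ K^n : u_n = 0 and u_1⋯u_{n−1} = 0}. Then the restriction of φ to K^n ∖ W is injective, and its image is V ∖ φ(W); that is, φ restricts to a bijection from K^n ∖ W onto V ∖ φ(W). -/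
/-!
Coordinatewise, `φ u = φ v` gives `u_n = v_n`, `u_i^{d_i} = v_i^{d_i}`, `u_i^{f_i} u_n^{g_i} =
v_i^{f_i} v_n^{g_i}` and `∏ u_i^{h_i} = ∏ v_i^{h_i}`. Off `W`, either `u_n ≠ 0`, and then
`u_i^{d_i} = v_i^{d_i}`, `u_i^{f_i} = v_i^{f_i}` with `gcd(d_i, f_i) = 1` force `u_i = v_i`; or all
`u_i, v_i` are nonzero, and the ratios `t_i = u_i / v_i` satisfy `t_i^{d_i} = 1` and
`∏ t_i^{h_i} = 1`. Raising the latter to `∏_{i ≠ j} d_i` kills every factor but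
`t_j^{h_j ∏_{i ≠ j} d_i}`, whose exponent is coprime to `d_j`, so `t_j = 1`. Finally, since
`u_i = 0 ↔ u_i^{d_i} = 0`, the fibres of `φ` do not meet both `W` and its complement, which gives
the description of the image.
-/

open MvPolynomial

open Function

theorem eq_of_pow_eq_pow_of_coprime {M : Type*} [CommGroupWithZero M] {x y : M} {a b : ℕ}
    (hab : a.Coprime b) (ha : x ^ a = y ^ a) (hb : x ^ b = y ^ b) : x = y := by
  rcases eq_or_ne y 0 with rfl | hy
  · rcases Nat.eq_zero_or_pos a with rfl | ha0
    · rw [Nat.coprime_zero_left] at hab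
      simpa [hab] using hb
    · exact pow_eq_zero_iff ha0.ne' |>.mp (ha.trans (zero_pow ha0.ne'))
  · rw [← div_eq_one_iff_eq hy, ← pow_eq_one_iff_of_coprime hab]
    exact ⟨by rw [div_pow, ha, div_self (pow_ne_zero _ hy)],
      by rw [div_pow, hb, div_self (pow_ne_zero _ hy)]⟩

theorem eq_one_of_pow_eq_one_of_prod_pow_eq_one {M : Type*} [CommMonoid M] {ι : Type*}
    [Fintype ι] {d e : ι → ℕ} (hd : Pairwise (Nat.Coprime on d))
    (hde : ∀ i, (d i).Coprime (e i)) {t : ι → M} (ht : ∀ i, t i ^ d i = 1)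
    (hprod : ∏ i, t i ^ e i = 1) (j : ι) : t j = 1 := by
  classical
  set m := ∏ i ∈ Finset.univ.erase j, d i
  have hm : (d j).Coprime (e j * m) :=
    (hde j).mul_right (Nat.Coprime.prod_right fun i hi => hd (Finset.ne_of_mem_erase hi).symm)
  have htm : ∀ i ≠ j, t i ^ m = 1 := fun i hi => by
    obtain ⟨k, hk⟩ : d i ∣ m :=
      Finset.dvd_prod_of_mem d (Finset.mem_erase.mpr ⟨hi, Finset.mem_univ i⟩)
    rw [hk, pow_mul, ht i, one_pow]
  have htj : t j ^ (e j * m) = 1 := by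
    rw [← one_pow m, ← hprod, ← Finset.prod_pow, Fintype.prod_eq_single j fun i hi => by
      rw [← pow_mul, mul_comm, pow_mul, htm i hi, one_pow], pow_mul]
  exact (pow_eq_one_iff_of_coprime hm).mp ⟨ht j, htj⟩

theorem eq_of_pow_eq_pow_of_prod_pow_eq {M : Type*} [CommGroupWithZero M] {ι : Type*}
    [Fintype ι] {d e : ι → ℕ} (hd : Pairwise (Nat.Coprime on d))
    (hde : ∀ i, (d i).Coprime (e i)) {x y : ι → M} (hy : ∀ i, y i ≠ 0)
    (hxy : ∀ i, x i ^ d i = y i ^ d i) (hprod : ∏ i, x i ^ e i = ∏ i, y i ^ e i) : x = y := by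
  funext j
  rw [← div_eq_one_iff_eq (hy j)]
  refine eq_one_of_pow_eq_one_of_prod_pow_eq_one hd hde (t := x / y) (fun i => ?_) ?_ j
  · rw [Pi.div_apply, div_pow, hxy i, div_self (pow_ne_zero _ (hy i))]
  · simp only [Pi.div_apply, div_pow, Finset.prod_div_distrib, hprod]
    exact div_self (Finset.prod_ne_zero_iff.mpr fun i _ => pow_ne_zero _ (hy i))

theorem Fin.funext_castLE_sub_one {α : Type*} {n : ℕ} (hn : 0 < n) {u v : Fin n → α}
    (h : ∀ j : Fin (n - 1),
      u (Fin.castLE (Nat.sub_le n 1) j) = v (Fin.castLE (Nat.sub_le n 1) j))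
    (hlast : u ⟨n - 1, by omega⟩ = v ⟨n - 1, by omega⟩) : u = v := by
  funext i
  by_cases hi : i.1 < n - 1
  · exact h ⟨i, hi⟩
  · rwa [show i = ⟨n - 1, by omega⟩ from Fin.ext (by simp only; omega)]

/-- The set `W` of the statement. -/
def exceptionalLocus (K : Type*) [CommMonoidWithZero K] (n : ℕ) (hn : 0 < n) :
    Set (Fin n → K) :=
  {u | u ⟨n - 1, by omega⟩ = 0 ∧ ∏ i : Fin (n - 1), u (Fin.castLE (Nat.sub_le n 1) i) = 0}

namespace phiMap

variable {K : Type*} [Field K] {n : ℕ} {d f g h : Fin (n - 1) → ℕ} {u v : Fin n → K}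

@[simp]
theorem inl_castLE (j : Fin (n - 1)) :
    phiMap n d f g h u (.inl (Fin.castLE (Nat.sub_le n 1) j)) =
      u (Fin.castLE (Nat.sub_le n 1) j) ^ d j := by
  simp [phiMap]

theorem inl_last (hn : 0 < n) :
    phiMap n d f g h u (.inl ⟨n - 1, by omega⟩) = u ⟨n - 1, by omega⟩ := by
  simp [phiMap]

theorem inr_castLE (hn : 0 < n) (j : Fin (n - 1)) :
    phiMap n d f g h u (.inr (Fin.castLE (Nat.sub_le n 1) j)) =
      u (Fin.castLE (Nat.sub_le n 1) j) ^ f j * u ⟨n - 1, by omega⟩ ^ g j := by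
  simp [phiMap]

theorem inr_last (hn : 0 < n) :
    phiMap n d f g h u (.inr ⟨n - 1, by omega⟩) =
      ∏ j : Fin (n - 1), u (Fin.castLE (Nat.sub_le n 1) j) ^ h j := by
  simp [phiMap]

theorem injOn_compl_exceptionalLocus (hn : 0 < n) (hdf : ∀ i, (d i).Coprime (f i))
    (hdh : ∀ i, (d i).Coprime (h i)) (hdd : Pairwise (Nat.Coprime on d)) :
    Set.InjOn (phiMap n d f g h) (exceptionalLocus K n hn)ᶜ := by
  intro u _ v hv huv
  have hlast : u ⟨n - 1, by omega⟩ = v ⟨n - 1, by omega⟩ := by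
    simpa [inl_last hn] using congrFun huv (.inl ⟨n - 1, by omega⟩)
  have hpow : ∀ j, u (Fin.castLE (Nat.sub_le n 1) j) ^ d j = v (Fin.castLE _ j) ^ d j :=
    fun j => by simpa using congrFun huv (.inl (Fin.castLE (Nat.sub_le n 1) j))
  refine Fin.funext_castLE_sub_one hn ?_ hlast
  by_cases hu0 : u ⟨n - 1, by omega⟩ = 0
  · have hv0 : ∀ j, v (Fin.castLE (Nat.sub_le n 1) j) ≠ 0 := fun j =>
      Finset.prod_ne_zero_iff.mp (fun hvprod => hv ⟨hlast ▸ hu0, hvprod⟩) j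
        (Finset.mem_univ j)
    exact congrFun <| eq_of_pow_eq_pow_of_prod_pow_eq hdd hdh hv0 hpow <| by
      simpa [inr_last hn] using congrFun huv (.inr ⟨n - 1, by omega⟩)
  · intro j
    refine eq_of_pow_eq_pow_of_coprime (hdf j) (hpow j)
      (mul_right_cancel₀ (pow_ne_zero (g j) hu0) ?_)
    simpa [inr_castLE hn, hlast] using congrFun huv (.inr (Fin.castLE (Nat.sub_le n 1) j))

theorem mem_exceptionalLocus_of_eq (hn : 0 < n) (hd : ∀ i, 0 < d i)
    (huv : phiMap n d f g h u = phiMap n d f g h v) (hv : v ∈ exceptionalLocus K n hn) :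
    u ∈ exceptionalLocus K n hn := by
  obtain ⟨hv0, hvprod⟩ := hv
  obtain ⟨j, -, hj⟩ := Finset.prod_eq_zero_iff.mp hvprod
  refine ⟨by simpa [inl_last hn, hv0] using congrFun huv (.inl ⟨n - 1, by omega⟩),
    Finset.prod_eq_zero (Finset.mem_univ j) ?_⟩
  simpa [hj, (hd j).ne'] using congrFun huv (.inl (Fin.castLE (Nat.sub_le n 1) j))

theorem preimage_image_exceptionalLocus (hn : 0 < n) (hd : ∀ i, 0 < d i) :
    phiMap n d f g h ⁻¹' (phiMap n d f g h '' exceptionalLocus K n hn) =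
      exceptionalLocus K n hn :=
  Set.Subset.antisymm (fun _ ⟨_, hv, hvu⟩ => mem_exceptionalLocus_of_eq hn hd hvu.symm hv)
    (Set.subset_preimage_image _ _)

end phiMap

/-- Let `W = {u ∈ K^n : u_n = 0 and u_1 ⋯ u_{n-1} = 0}`. Then `φ` restricts to a
bijection from `K^n ∖ W` onto `V ∖ φ(W)`: it is injective on `K^n ∖ W` and its
image is `V ∖ φ(W)`. -/
theorem toric_phi_bijective_off_W
    (K : Type*) [Field K]
    (n : ℕ) (hn : 3 ≤ n)
    (d f g h : Fin (n - 1) → ℕ)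
    (hd : ∀ i, 0 < d i)
    (hdf : ∀ i, Nat.Coprime (d i) (f i))
    (hdh : ∀ i, Nat.Coprime (d i) (h i))
    (hdd : ∀ i j, i ≠ j → Nat.Coprime (d i) (d j)) :
    ∀ W : Set (Fin n → K),
      W = {u : Fin n → K | u ⟨n - 1, by omega⟩ = 0 ∧
            ∏ i : Fin (n - 1), u (Fin.castLE (by omega) i) = 0} →
      Set.InjOn (phiMap n d f g h) Wᶜ ∧
      phiMap n d f g h '' Wᶜ
        = Set.range (phiMap n d f g h) \ phiMap n d f g h '' W := by
  intro W hW
  obtain rfl : W = exceptionalLocus K n (by omega) := hW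
  refine ⟨phiMap.injOn_compl_exceptionalLocus (by omega) hdf hdh hdd, ?_⟩
  rw [← Set.image_compl_preimage, phiMap.preimage_image_exceptionalLocus (by omega) hd]
end

section
/- V is Zariski closed in K^{2n}: there is a finite set of polynomials in K[x_1,…,x_n,y_1,…,y_n] whose common zero set in K^{2n} is exactly the image of φ. -/
open MvPolynomial

lemma key_root {K : Type*} [Field K] {d h : ℕ} (hd : 0 < d) (hcop : Nat.Coprime d h)
    {x z : K} (hx : x ≠ 0) (hz : z ^ d = x ^ h) : ∃ u : K, u ^ d = x ∧ u ^ h = z := by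
  have hz0 : z ≠ 0 := by
    intro h0
    rw [h0, zero_pow hd.ne'] at hz
    exact (pow_ne_zero _ hx) hz.symm
  obtain ⟨A, B, hab⟩ := Nat.isCoprime_iff_coprime.mpr hcop
  have hzd : z ^ (d : ℤ) = x ^ (h : ℤ) := by rw [zpow_natCast, zpow_natCast, hz]
  refine ⟨x ^ A * z ^ B, ?_, ?_⟩
  · rw [← zpow_natCast (x ^ A * z ^ B) d, mul_zpow, ← zpow_mul, ← zpow_mul,
      mul_comm B (d : ℤ), zpow_mul z (d : ℤ) B, hzd, ← zpow_mul, ← zpow_add₀ hx]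
    rw [show A * (d : ℤ) + (h : ℤ) * B = 1 by linarith, zpow_one]
  · rw [← zpow_natCast (x ^ A * z ^ B) h, mul_zpow, ← zpow_mul, ← zpow_mul,
      mul_comm A (h : ℤ), zpow_mul x (h : ℤ) A, ← hzd, ← zpow_mul, ← zpow_add₀ hz0]
    rw [show (d : ℤ) * A + B * (h : ℤ) = 1 by linarith, zpow_one]

lemma prod_root {K : Type*} [Field K] {ι : Type*} [DecidableEq ι]
    (d h : ι → ℕ) (hd : ∀ i, 0 < d i) (hdh : ∀ i, Nat.Coprime (d i) (h i))
    (hdd : ∀ i j, i ≠ j → Nat.Coprime (d i) (d j)) (s : Finset ι) :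
    ∀ (x : ι → K) (y : K), (∀ i ∈ s, x i ≠ 0) →
      y ^ (∏ i ∈ s, d i) = ∏ i ∈ s, x i ^ (h i * ∏ j ∈ s.erase i, d j) →
      ∃ c : ι → K, (∀ i ∈ s, c i ^ d i = x i) ∧ ∏ i ∈ s, c i ^ h i = y := by
  induction s using Finset.induction with
  | empty =>
    intro x y _ hy
    simp only [Finset.prod_empty, pow_one] at hy
    exact ⟨fun _ => 1, fun i hi => absurd hi (by simp), by simp [hy]⟩
  | @insert i₀ s' hi₀ ih =>
    intro x y hx hy
    set D' : ℕ := ∏ j ∈ s', d j with hD'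
    set A : K := ∏ i ∈ s', x i ^ (h i * ∏ j ∈ s'.erase i, d j) with hA
    have hxne : ∀ i ∈ s', x i ≠ 0 := fun i hi => hx i (Finset.mem_insert_of_mem hi)
    have hAne : A ≠ 0 := Finset.prod_ne_zero_iff.mpr fun i hi => pow_ne_zero _ (hxne i hi)
    have hx0 : x i₀ ≠ 0 := hx i₀ (Finset.mem_insert_self _ _)
    -- rewrite hy
    rw [Finset.prod_insert hi₀, Finset.prod_insert hi₀, Finset.erase_insert hi₀] at hy
    have hy' : y ^ (d i₀ * D') = x i₀ ^ (h i₀ * D') * A ^ (d i₀) := by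
      rw [hy]
      congr 1
      rw [hA, ← Finset.prod_pow]
      refine Finset.prod_congr rfl fun i hi => ?_
      have hne : i ≠ i₀ := fun e => hi₀ (e ▸ hi)
      rw [Finset.erase_insert_of_ne hne.symm, Finset.prod_insert (fun hmem => hi₀ (Finset.mem_of_mem_erase hmem)), ← pow_mul]
      ring_nf
    have hyne : y ≠ 0 := by
      intro h0
      rw [h0, zero_pow (Nat.mul_pos (hd i₀) (Finset.prod_pos (fun j _ => hd j))).ne'] at hy'
      exact (mul_ne_zero (pow_ne_zero _ hx0) (pow_ne_zero _ hAne)) hy'.symm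
    have hcop : Nat.Coprime (d i₀) (h i₀ * D') := by
      refine Nat.Coprime.mul_right (hdh i₀) (Nat.Coprime.prod_right fun j hj => hdd i₀ j ?_)
      rintro rfl; exact hi₀ hj
    have hz : (y ^ D' / A) ^ (d i₀) = x i₀ ^ (h i₀ * D') := by
      rw [div_pow, ← pow_mul, mul_comm D' (d i₀), hy', mul_div_assoc, div_self (pow_ne_zero _ hAne), mul_one]
    obtain ⟨u₀, hu1, hu2⟩ := key_root (hd i₀) hcop hx0 hz
    have hu0ne : u₀ ≠ 0 := fun h0 => hx0 (by rw [← hu1, h0, zero_pow (hd i₀).ne'])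
    have hy'' : (y / u₀ ^ h i₀) ^ D' = A := by
      rw [div_pow, ← pow_mul, hu2]
      field_simp
    obtain ⟨c', hc1, hc2⟩ := ih x (y / u₀ ^ h i₀) hxne (by rw [hy''])
    refine ⟨fun i => if i = i₀ then u₀ else c' i, ?_, ?_⟩
    · intro i hi
      rcases Finset.mem_insert.mp hi with rfl | hi'
      · simp [hu1]
      · have hne : i ≠ i₀ := fun e => hi₀ (e ▸ hi')
        simp only [if_neg hne]; exact hc1 i hi'
    · have hprod : ∏ i ∈ s', (if i = i₀ then u₀ else c' i) ^ h i = ∏ i ∈ s', c' i ^ h i := by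
        refine Finset.prod_congr rfl fun i hi => ?_
        have hne : i ≠ i₀ := fun e => hi₀ (e ▸ hi)
        rw [if_neg hne]
      simp only [Finset.prod_insert hi₀, if_pos rfl, if_true, hprod, hc2]
      rw [mul_div_cancel₀ _ (pow_ne_zero _ hu0ne)]

lemma exists_nat_bezout (d f h : ℕ) (hd : 0 < d) (hcop : Nat.Coprime d f) :
    ∃ a β γ : ℕ, h + β * d = a * f + γ * d := by
  obtain ⟨A, B, hab⟩ := Nat.isCoprime_iff_coprime.mpr hcop
  set a' : ℤ := (h * B) % d with ha'
  set q : ℤ := (h * B) / d with hq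
  have hdvd : (h : ℤ) * B = d * q + a' := (Int.mul_ediv_add_emod _ _).symm
  have ha'nn : 0 ≤ a' := Int.emod_nonneg _ (by exact_mod_cast hd.ne')
  set k : ℤ := h * A + q * f with hk
  have heq : (h : ℤ) = k * d + a' * f := by
    have := hab
    nlinarith [hdvd]
  rcases le_or_gt 0 k with hkx | hkx
  · refine ⟨a'.toNat, 0, k.toNat, ?_⟩
    have : (h : ℤ) + 0 * d = a'.toNat * f + k.toNat * d := by
      push_cast [Int.toNat_of_nonneg ha'nn, Int.toNat_of_nonneg hkx]
      linarith
    exact_mod_cast this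
  · refine ⟨a'.toNat, (-k).toNat, 0, ?_⟩
    have : (h : ℤ) + (-k).toNat * d = a'.toNat * f + 0 * d := by
      push_cast [Int.toNat_of_nonneg ha'nn, Int.toNat_of_nonneg (by linarith : (0:ℤ) ≤ -k)]
      linarith
    exact_mod_cast this

lemma mem_range_phiMap {K : Type*} [Field K] {n : ℕ} (hn : 0 < n)
    (d f g h : Fin (n - 1) → ℕ) (w : Fin n ⊕ Fin n → K) :
    w ∈ Set.range (phiMap n d f g h) ↔
      ∃ c : Fin (n - 1) → K,
        (∀ i : Fin (n - 1), c i ^ d i = w (Sum.inl (Fin.castLE (Nat.sub_le n 1) i))) ∧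
        (∀ i : Fin (n - 1), c i ^ f i * w (Sum.inl ⟨n - 1, Nat.sub_lt hn one_pos⟩) ^ g i
            = w (Sum.inr (Fin.castLE (Nat.sub_le n 1) i))) ∧
        (∏ i : Fin (n - 1), c i ^ h i = w (Sum.inr ⟨n - 1, Nat.sub_lt hn one_pos⟩)) := by
  constructor
  · rintro ⟨u, rfl⟩
    refine ⟨fun i => u (Fin.castLE (Nat.sub_le n 1) i), fun i => ?_, fun i => ?_, ?_⟩
    · simp only [phiMap, Sum.elim_inl, Fin.coe_castLE]
      rw [dif_pos i.isLt]
    · simp only [phiMap, Sum.elim_inl, Sum.elim_inr, Fin.coe_castLE]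
      rw [dif_pos i.isLt, dif_neg (lt_irrefl _)]
    · simp only [phiMap, Sum.elim_inr]
      rw [dif_neg (lt_irrefl (n-1))]
  · rintro ⟨c, hc1, hc2, hc3⟩
    refine ⟨fun i => if hi : i.1 < n - 1 then c ⟨i.1, hi⟩
      else w (Sum.inl ⟨n - 1, Nat.sub_lt hn one_pos⟩), ?_⟩
    funext v
    match v with
    | Sum.inl i =>
      simp only [phiMap, Sum.elim_inl]
      by_cases hi : i.1 < n - 1
      · rw [dif_pos hi, dif_pos hi]
        exact hc1 ⟨i.1, hi⟩
      · rw [dif_neg hi, dif_neg hi]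
        have hie : i = ⟨n - 1, Nat.sub_lt hn one_pos⟩ :=
          Fin.ext (show i.1 = n - 1 by have := i.isLt; omega)
        rw [hie]
    | Sum.inr i =>
      simp only [phiMap, Sum.elim_inr]
      by_cases hi : i.1 < n - 1
      · rw [dif_pos hi, dif_pos hi, dif_neg (lt_irrefl (n-1))]
        exact hc2 ⟨i.1, hi⟩
      · rw [dif_neg hi]
        have hie : i = ⟨n - 1, Nat.sub_lt hn one_pos⟩ :=
          Fin.ext (show i.1 = n - 1 by have := i.isLt; omega)
        have : ∀ j : Fin (n-1),
            (if hj : (Fin.castLE (Nat.sub_le n 1) j).1 < n - 1 then c ⟨(Fin.castLE (Nat.sub_le n 1) j).1, hj⟩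
              else w (Sum.inl ⟨n - 1, Nat.sub_lt hn one_pos⟩)) = c j := by
          intro j
          rw [dif_pos (show (Fin.castLE (Nat.sub_le n 1) j).1 < n - 1 from j.isLt)]
          rfl
        calc (∏ j : Fin (n-1), (fun i : Fin n => if hi : i.1 < n - 1 then c ⟨i.1, hi⟩
              else w (Sum.inl ⟨n - 1, Nat.sub_lt hn one_pos⟩)) (Fin.castLE (Nat.sub_le n 1) j) ^ h j)
            = ∏ j : Fin (n-1), c j ^ h j := Finset.prod_congr rfl fun j _ => congrArg (fun t => t ^ h j) (this j)
          _ = w (Sum.inr ⟨n - 1, Nat.sub_lt hn one_pos⟩) := hc3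
          _ = w (Sum.inr i) := by rw [hie]

lemma components_iff {K : Type*} [Field K] [IsAlgClosed K] {m : ℕ}
    (d f g h a β γ : Fin m → ℕ)
    (hd : ∀ i, 0 < d i) (hf : ∀ i, 0 < f i) (hg : ∀ i, 0 < g i) (hh : ∀ i, 0 < h i)
    (hdf : ∀ i, Nat.Coprime (d i) (f i)) (hdh : ∀ i, Nat.Coprime (d i) (h i))
    (hdd : ∀ i j, i ≠ j → Nat.Coprime (d i) (d j))
    (hkey : ∀ i, h i + β i * d i = a i * f i + γ i * d i)
    (Xv Yv : Fin m → K) (Xn Yn : K) :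
    ((∀ i, Yv i ^ d i = Xv i ^ f i * Xn ^ (d i * g i)) ∧
      Yn ^ (∏ i, d i) = (∏ i, Xv i ^ (h i * ∏ j ∈ Finset.univ.erase i, d j)) ∧
      Yn * Xn ^ (∑ i, g i * a i) * ∏ i, Xv i ^ β i
        = (∏ i, Yv i ^ a i) * ∏ i, Xv i ^ γ i) ↔
    ∃ c : Fin m → K, (∀ i, c i ^ d i = Xv i) ∧
      (∀ i, c i ^ f i * Xn ^ g i = Yv i) ∧ (∏ i, c i ^ h i = Yn) := by
  classical
  set D : ℕ := ∏ i, d i with hD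
  set e : Fin m → ℕ := fun i => ∏ j ∈ Finset.univ.erase i, d j with he
  set G : ℕ := ∑ i, g i * a i with hG
  have hDpos : 0 < D := Finset.prod_pos fun i _ => hd i
  have hepos : ∀ i, 0 < e i := fun i => Finset.prod_pos fun j _ => hd j
  have hDe : ∀ i, D = d i * e i := fun i =>
    (Finset.mul_prod_erase _ _ (Finset.mem_univ i)).symm
  constructor
  · rintro ⟨hE1, hE2, hE3⟩
    by_cases hXn : Xn = 0
    · -- u_n = 0 stratum
      have hY0 : ∀ i, Yv i = 0 := by
        intro i
        have := hE1 i
        rw [hXn, zero_pow (Nat.mul_pos (hd i) (hg i)).ne', mul_zero] at this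
        exact (pow_eq_zero_iff (hd i).ne').mp this
      by_cases hX : ∀ i, Xv i ≠ 0
      · obtain ⟨c, hc1, hc2⟩ := prod_root d h hd hdh hdd Finset.univ Xv Yn
          (fun i _ => hX i) hE2
        exact ⟨c, fun i => hc1 i (Finset.mem_univ i),
          fun i => by rw [hXn, zero_pow (hg i).ne', mul_zero, hY0 i], hc2⟩
      · push_neg at hX
        obtain ⟨j, hj⟩ := hX
        have hYn : Yn = 0 := by
          have hz : (∏ i, Xv i ^ (h i * e i)) = 0 :=
            Finset.prod_eq_zero (Finset.mem_univ j)
              (by rw [hj]; exact zero_pow (Nat.mul_pos (hh j) (hepos j)).ne')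
          rw [hz] at hE2
          exact (pow_eq_zero_iff hDpos.ne').mp hE2
        choose c hc using fun i => IsAlgClosed.exists_pow_nat_eq (Xv i) (hd i)
        refine ⟨c, hc, fun i => by rw [hXn, zero_pow (hg i).ne', mul_zero, hY0 i], ?_⟩
        rw [hYn]
        refine Finset.prod_eq_zero (Finset.mem_univ j) ?_
        have hcj : c j = 0 := by
          have := hc j; rw [hj] at this
          exact (pow_eq_zero_iff (hd j).ne').mp this
        rw [hcj]; exact zero_pow (hh j).ne'
    · -- u_n ≠ 0
      have hcx : ∀ i, ∃ ci : K, ci ^ d i = Xv i ∧ ci ^ f i * Xn ^ g i = Yv i := by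
        intro i
        by_cases hXi : Xv i = 0
        · have hYi : Yv i = 0 := by
            have := hE1 i
            rw [hXi, zero_pow (hf i).ne', zero_mul] at this
            exact (pow_eq_zero_iff (hd i).ne').mp this
          exact ⟨0, by rw [zero_pow (hd i).ne', hXi],
            by rw [zero_pow (hf i).ne', zero_mul, hYi]⟩
        · have hz : (Yv i / Xn ^ g i) ^ d i = Xv i ^ f i := by
            rw [div_pow, ← pow_mul, hE1 i, Nat.mul_comm (g i) (d i), mul_div_assoc,
              div_self (pow_ne_zero _ hXn), mul_one]
          obtain ⟨u, hu1, hu2⟩ := key_root (hd i) (hdf i) hXi hz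
          exact ⟨u, hu1, by rw [hu2, div_mul_cancel₀ _ (pow_ne_zero _ hXn)]⟩
      choose c hc1 hc2 using hcx
      refine ⟨c, hc1, hc2, ?_⟩
      by_cases hX : ∀ i, Xv i ≠ 0
      · have hcne : ∀ i, c i ≠ 0 := fun i h0 =>
          hX i (by rw [← hc1 i, h0, zero_pow (hd i).ne'])
        have hXb : ∏ i, Xv i ^ β i = ∏ i, c i ^ (β i * d i) :=
          Finset.prod_congr rfl fun i _ => by
            rw [← hc1 i, ← pow_mul, Nat.mul_comm (d i) (β i)]
        have hXg : ∏ i, Xv i ^ γ i = ∏ i, c i ^ (γ i * d i) :=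
          Finset.prod_congr rfl fun i _ => by
            rw [← hc1 i, ← pow_mul, Nat.mul_comm (d i) (γ i)]
        have hYa : ∏ i, Yv i ^ a i = (∏ i, c i ^ (a i * f i)) * Xn ^ G := by
          calc ∏ i, Yv i ^ a i = ∏ i, (c i ^ (a i * f i) * Xn ^ (g i * a i)) := by
                refine Finset.prod_congr rfl fun i _ => ?_
                rw [← hc2 i, mul_pow, ← pow_mul, ← pow_mul, Nat.mul_comm (f i) (a i)]
            _ = (∏ i, c i ^ (a i * f i)) * ∏ i, Xn ^ (g i * a i) :=
                Finset.prod_mul_distrib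
            _ = (∏ i, c i ^ (a i * f i)) * Xn ^ G := by
                rw [Finset.prod_pow_eq_pow_sum]
        have K1 : ∏ i, c i ^ (h i + β i * d i) = ∏ i, c i ^ (a i * f i + γ i * d i) :=
          Finset.prod_congr rfl fun i _ => by rw [hkey i]
        have hMne : Xn ^ G * ∏ i, c i ^ (β i * d i) ≠ 0 :=
          mul_ne_zero (pow_ne_zero _ hXn)
            (Finset.prod_ne_zero_iff.mpr fun i _ => pow_ne_zero _ (hcne i))
        refine mul_right_cancel₀ hMne ?_
        calc (∏ i, c i ^ h i) * (Xn ^ G * ∏ i, c i ^ (β i * d i))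
            = Xn ^ G * ∏ i, (c i ^ h i * c i ^ (β i * d i)) := by
              rw [Finset.prod_mul_distrib]; ring
          _ = Xn ^ G * ∏ i, c i ^ (h i + β i * d i) := by
              rw [Finset.prod_congr rfl fun i _ => (pow_add (c i) (h i) (β i * d i)).symm]
          _ = Xn ^ G * ∏ i, c i ^ (a i * f i + γ i * d i) := by rw [K1]
          _ = Xn ^ G * ∏ i, (c i ^ (a i * f i) * c i ^ (γ i * d i)) := by
              rw [Finset.prod_congr rfl fun i _ => pow_add (c i) (a i * f i) (γ i * d i)]
          _ = ((∏ i, c i ^ (a i * f i)) * Xn ^ G) * ∏ i, c i ^ (γ i * d i) := by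
              rw [Finset.prod_mul_distrib]; ring
          _ = (∏ i, Yv i ^ a i) * ∏ i, Xv i ^ γ i := by rw [hYa, hXg]
          _ = Yn * Xn ^ G * ∏ i, Xv i ^ β i := hE3.symm
          _ = Yn * (Xn ^ G * ∏ i, c i ^ (β i * d i)) := by rw [hXb]; ring
      · push_neg at hX
        obtain ⟨j, hj⟩ := hX
        have hYn : Yn = 0 := by
          have hz : (∏ i, Xv i ^ (h i * e i)) = 0 :=
            Finset.prod_eq_zero (Finset.mem_univ j)
              (by rw [hj]; exact zero_pow (Nat.mul_pos (hh j) (hepos j)).ne')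
          rw [hz] at hE2
          exact (pow_eq_zero_iff hDpos.ne').mp hE2
        have hcj : c j = 0 := by
          have := hc1 j; rw [hj] at this
          exact (pow_eq_zero_iff (hd j).ne').mp this
        rw [hYn]
        exact Finset.prod_eq_zero (Finset.mem_univ j) (by rw [hcj]; exact zero_pow (hh j).ne')
  · rintro ⟨c, hc1, hc2, hc3⟩
    refine ⟨fun i => ?_, ?_, ?_⟩
    · rw [← hc2 i, ← hc1 i, mul_pow, ← pow_mul, ← pow_mul, ← pow_mul,
        Nat.mul_comm (f i) (d i), Nat.mul_comm (g i) (d i)]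
    · rw [← hc3, ← Finset.prod_pow]
      refine Finset.prod_congr rfl fun i _ => ?_
      rw [← hc1 i, ← pow_mul, ← pow_mul]
      congr 1
      rw [hDe i]; ring
    · have hXb : ∏ i, Xv i ^ β i = ∏ i, c i ^ (β i * d i) :=
        Finset.prod_congr rfl fun i _ => by
          rw [← hc1 i, ← pow_mul, Nat.mul_comm (d i) (β i)]
      have hXg : ∏ i, Xv i ^ γ i = ∏ i, c i ^ (γ i * d i) :=
        Finset.prod_congr rfl fun i _ => by
          rw [← hc1 i, ← pow_mul, Nat.mul_comm (d i) (γ i)]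
      have hYa : ∏ i, Yv i ^ a i = (∏ i, c i ^ (a i * f i)) * Xn ^ G := by
        calc ∏ i, Yv i ^ a i = ∏ i, (c i ^ (a i * f i) * Xn ^ (g i * a i)) := by
              refine Finset.prod_congr rfl fun i _ => ?_
              rw [← hc2 i, mul_pow, ← pow_mul, ← pow_mul, Nat.mul_comm (f i) (a i)]
          _ = (∏ i, c i ^ (a i * f i)) * ∏ i, Xn ^ (g i * a i) :=
              Finset.prod_mul_distrib
          _ = (∏ i, c i ^ (a i * f i)) * Xn ^ G := by
              rw [Finset.prod_pow_eq_pow_sum]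
      have K1 : ∏ i, c i ^ (h i + β i * d i) = ∏ i, c i ^ (a i * f i + γ i * d i) :=
        Finset.prod_congr rfl fun i _ => by rw [hkey i]
      calc Yn * Xn ^ G * ∏ i, Xv i ^ β i
          = Xn ^ G * ∏ i, (c i ^ h i * c i ^ (β i * d i)) := by
            rw [← hc3, hXb, Finset.prod_mul_distrib]; ring
        _ = Xn ^ G * ∏ i, c i ^ (h i + β i * d i) := by
            rw [Finset.prod_congr rfl fun i _ => (pow_add (c i) (h i) (β i * d i)).symm]
        _ = Xn ^ G * ∏ i, c i ^ (a i * f i + γ i * d i) := by rw [K1]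
        _ = Xn ^ G * ∏ i, (c i ^ (a i * f i) * c i ^ (γ i * d i)) := by
            rw [Finset.prod_congr rfl fun i _ => pow_add (c i) (a i * f i) (γ i * d i)]
        _ = ((∏ i, c i ^ (a i * f i)) * Xn ^ G) * ∏ i, c i ^ (γ i * d i) := by
            rw [Finset.prod_mul_distrib]; ring
        _ = (∏ i, Yv i ^ a i) * ∏ i, Xv i ^ γ i := by rw [hYa, hXg]

/-- `V` is Zariski closed in `K^{2n}`: there is a finite set of polynomials
whose common zero set is exactly the image of `φ`. -/
theorem toric_image_is_zariski_closed
    (K : Type*) [Field K] [IsAlgClosed K]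
    (n : ℕ) (hn : 3 ≤ n)
    (d f g h : Fin (n - 1) → ℕ)
    (hd : ∀ i, 0 < d i) (hf : ∀ i, 0 < f i) (hg : ∀ i, 0 < g i) (hh : ∀ i, 0 < h i)
    (hdf : ∀ i, Nat.Coprime (d i) (f i))
    (hdh : ∀ i, Nat.Coprime (d i) (h i))
    (hdd : ∀ i j, i ≠ j → Nat.Coprime (d i) (d j)) :
    ∃ S : Finset (MvPolynomial (Fin n ⊕ Fin n) K),
      {w : Fin n ⊕ Fin n → K | ∀ P ∈ S, MvPolynomial.eval w P = 0}
        = Set.range (phiMap n d f g h) := by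
  classical
  have hn0 : 0 < n := by omega
  obtain ⟨a, β, γ, hkey⟩ : ∃ a β γ : Fin (n - 1) → ℕ,
      ∀ i, h i + β i * d i = a i * f i + γ i * d i := by
    choose a β γ hk using fun i => exists_nat_bezout (d i) (f i) (h i) (hd i) (hdf i)
    exact ⟨a, β, γ, hk⟩
  set lx : Fin (n - 1) → Fin n ⊕ Fin n := fun i => Sum.inl (Fin.castLE (Nat.sub_le n 1) i)
    with hlx
  set ly : Fin (n - 1) → Fin n ⊕ Fin n := fun i => Sum.inr (Fin.castLE (Nat.sub_le n 1) i)
    with hly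
  set lxn : Fin n ⊕ Fin n := Sum.inl ⟨n - 1, Nat.sub_lt hn0 one_pos⟩ with hlxn
  set lyn : Fin n ⊕ Fin n := Sum.inr ⟨n - 1, Nat.sub_lt hn0 one_pos⟩ with hlyn
  refine ⟨insert
      (X lyn ^ (∏ i, d i) - ∏ i, X (lx i) ^ (h i * ∏ j ∈ Finset.univ.erase i, d j))
      (insert
        (X lyn * X lxn ^ (∑ i, g i * a i) * ∏ i, X (lx i) ^ β i
          - (∏ i, X (ly i) ^ a i) * ∏ i, X (lx i) ^ γ i)
        (Finset.image (fun i : Fin (n - 1) =>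
          X (ly i) ^ d i - X (lx i) ^ f i * X lxn ^ (d i * g i)) Finset.univ)), ?_⟩
  ext w
  simp only [Set.mem_setOf_eq]
  rw [mem_range_phiMap hn0 d f g h w]
  have CI := components_iff d f g h a β γ hd hf hg hh hdf hdh hdd hkey
      (fun i => w (lx i)) (fun i => w (ly i)) (w lxn) (w lyn)
  constructor
  · intro H
    refine CI.mp ⟨fun i => ?_, ?_, ?_⟩
    · have := H _ (Finset.mem_insert_of_mem (Finset.mem_insert_of_mem
        (Finset.mem_image_of_mem _ (Finset.mem_univ i))))
      simpa only [map_sub, map_mul, map_pow, eval_X, sub_eq_zero] using this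
    · have := H _ (Finset.mem_insert_self _ _)
      simpa only [map_sub, map_mul, map_pow, map_prod, eval_X, sub_eq_zero] using this
    · have := H _ (Finset.mem_insert_of_mem (Finset.mem_insert_self _ _))
      simpa only [map_sub, map_mul, map_pow, map_prod, eval_X, sub_eq_zero] using this
  · intro hw P hP
    obtain ⟨hE1, hE2, hE3⟩ := CI.mpr hw
    simp only [Finset.mem_insert, Finset.mem_image, Finset.mem_univ, true_and] at hP
    rcases hP with rfl | rfl | ⟨i, rfl⟩
    · simp only [map_sub, map_mul, map_pow, map_prod, eval_X, sub_eq_zero]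
      exact hE2
    · simp only [map_sub, map_mul, map_pow, map_prod, eval_X, sub_eq_zero]
      exact hE3
    · simp only [map_sub, map_mul, map_pow, eval_X, sub_eq_zero]
      exact hE1 i
end

section
/- Let K be a field of characteristic zero. The kernel of the K-algebra homomorphism K[x_1,x_2,x_3,y_1,y_2,y_3] → K[u_1,u_2,u_3] sending x_1 ↦ u_1^2, x_2 ↦ u_2^3, x_3 ↦ u_3, y_1 ↦ u_1^3u_3, y_2 ↦ u_2^5u_3, y_3 ↦ u_1^3u_2^5 is generated by the eight binomials y_1^2 − x_1^3x_3^2, y_2^3 − x_2^5x_3^3, y_3^6 − x_1^9x_2^{10}, x_3^2y_3 − y_1y_2, y_1y_3 − x_1^3y_2, y_2y_3^2 − x_1^3x_2^5x_3, y_2^2y_3 − x_2^5x_3y_1, and x_3y_3^3 − x_1^3x_2^5y_1. -/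
open MvPolynomial Finsupp

namespace ToricEightAux

theorem classify (x2 x3 x4 x5 : ℕ) (a1 : x3 ≤ 1) (a2 : x4 ≤ 2) (a3 : x5 ≤ 5)
    (a4 : x3 = 0 ∨ x5 = 0) (a5 : x4 ≤ 1 ∨ x5 = 0) (a6 : x4 = 0 ∨ x5 ≤ 1)
    (a7 : x2 ≤ 1 ∨ x5 = 0) (a8 : x2 = 0 ∨ x5 ≤ 2) :
    (x5 = 0 ∧ x3 ≤ 1 ∧ x4 ≤ 2) ∨ (x5 = 1 ∧ x3 = 0 ∧ x4 ≤ 1 ∧ x2 ≤ 1) ∨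
      (x5 = 2 ∧ x3 = 0 ∧ x4 = 0 ∧ x2 ≤ 1) ∨ (x5 = 3 ∧ x3 = 0 ∧ x4 = 0 ∧ x2 = 0) ∨
      (x5 = 4 ∧ x3 = 0 ∧ x4 = 0 ∧ x2 = 0) ∨ (x5 = 5 ∧ x3 = 0 ∧ x4 = 0 ∧ x2 = 0) := by
  have h5 : x5 = 0 ∨ x5 = 1 ∨ x5 = 2 ∨ x5 = 3 ∨ x5 = 4 ∨ x5 = 5 := by
    clear a4 a5 a6 a7 a8; omega
  rcases h5 with rfl|rfl|rfl|rfl|rfl|rfl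
  · exact Or.inl ⟨rfl, a1, a2⟩
  · exact Or.inr (Or.inl ⟨rfl, a4.resolve_right (by decide), a5.resolve_right (by decide),
      a7.resolve_right (by decide)⟩)
  · exact Or.inr (Or.inr (Or.inl ⟨rfl, a4.resolve_right (by decide),
      a6.resolve_right (by decide), a7.resolve_right (by decide)⟩))
  · exact Or.inr (Or.inr (Or.inr (Or.inl ⟨rfl, a4.resolve_right (by decide),
      a6.resolve_right (by decide), a8.resolve_right (by decide)⟩)))
  · exact Or.inr (Or.inr (Or.inr (Or.inr (Or.inl ⟨rfl, a4.resolve_right (by decide),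
      a6.resolve_right (by decide), a8.resolve_right (by decide)⟩))))
  · exact Or.inr (Or.inr (Or.inr (Or.inr (Or.inr ⟨rfl, a4.resolve_right (by decide),
      a6.resolve_right (by decide), a8.resolve_right (by decide)⟩))))

theorem nat_inj (v0 v1 v2 v3 v4 v5 w0 w1 w2 w3 w4 w5 : ℕ)
    (hV : (v5 = 0 ∧ v3 ≤ 1 ∧ v4 ≤ 2) ∨ (v5 = 1 ∧ v3 = 0 ∧ v4 ≤ 1 ∧ v2 ≤ 1) ∨
      (v5 = 2 ∧ v3 = 0 ∧ v4 = 0 ∧ v2 ≤ 1) ∨ (v5 = 3 ∧ v3 = 0 ∧ v4 = 0 ∧ v2 = 0) ∨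
      (v5 = 4 ∧ v3 = 0 ∧ v4 = 0 ∧ v2 = 0) ∨ (v5 = 5 ∧ v3 = 0 ∧ v4 = 0 ∧ v2 = 0))
    (hW : (w5 = 0 ∧ w3 ≤ 1 ∧ w4 ≤ 2) ∨ (w5 = 1 ∧ w3 = 0 ∧ w4 ≤ 1 ∧ w2 ≤ 1) ∨
      (w5 = 2 ∧ w3 = 0 ∧ w4 = 0 ∧ w2 ≤ 1) ∨ (w5 = 3 ∧ w3 = 0 ∧ w4 = 0 ∧ w2 = 0) ∨
      (w5 = 4 ∧ w3 = 0 ∧ w4 = 0 ∧ w2 = 0) ∨ (w5 = 5 ∧ w3 = 0 ∧ w4 = 0 ∧ w2 = 0))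
    (h0 : 2*v0+3*v3+3*v5 = 2*w0+3*w3+3*w5)
    (h1 : 3*v1+5*v4+5*v5 = 3*w1+5*w4+5*w5)
    (h2 : v2+v3+v4 = w2+w3+w4) : v0 = w0 ∧ v1 = w1 ∧ v2 = w2 ∧ v3 = w3 ∧ v4 = w4 ∧ v5 = w5 := by
  rcases hV with ⟨e1,e2,e3⟩|⟨e1,e2,e3,e4⟩|⟨e1,e2,e3,e4⟩|⟨e1,e2,e3,e4⟩|⟨e1,e2,e3,e4⟩|⟨e1,e2,e3,e4⟩ <;>
    subst e1 <;>
    rcases hW with ⟨f1,f2,f3⟩|⟨f1,f2,f3,f4⟩|⟨f1,f2,f3,f4⟩|⟨f1,f2,f3,f4⟩|⟨f1,f2,f3,f4⟩|⟨f1,f2,f3,f4⟩ <;>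
    subst f1 <;> omega

lemma nand_le {a b m k : ℕ} (h : ¬(m ≤ a ∧ k ≤ b)) : a < m ∨ b < k := by
  by_cases ha : m ≤ a
  · exact Or.inr (lt_of_not_ge fun hk => h ⟨ha, hk⟩)
  · exact Or.inl (lt_of_not_ge ha)

variable (K : Type*) [Field K]

noncomputable def phi : MvPolynomial (Fin 6) K →ₐ[K] MvPolynomial (Fin 3) K :=
  aeval ![X 0 ^ 2, X 1 ^ 3, X 2, X 0 ^ 3 * X 2, X 1 ^ 5 * X 2, X 0 ^ 3 * X 1 ^ 5]

noncomputable def gens : Set (MvPolynomial (Fin 6) K) :=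
  {X 3 ^ 2 - X 0 ^ 3 * X 2 ^ 2,
   X 4 ^ 3 - X 1 ^ 5 * X 2 ^ 3,
   X 5 ^ 6 - X 0 ^ 9 * X 1 ^ 10,
   X 2 ^ 2 * X 5 - X 3 * X 4,
   X 3 * X 5 - X 0 ^ 3 * X 4,
   X 4 * X 5 ^ 2 - X 0 ^ 3 * X 1 ^ 5 * X 2,
   X 4 ^ 2 * X 5 - X 1 ^ 5 * X 2 * X 3,
   X 2 * X 5 ^ 3 - X 0 ^ 3 * X 1 ^ 5 * X 3}

noncomputable def S : Ideal (MvPolynomial (Fin 6) K) := Ideal.span (gens K)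

lemma phi_C (r : K) : phi K (C r) = C r := by simp [phi, algebraMap_eq]
lemma phi_X0 : phi K (X 0) = X 0 ^ 2 := by rw [phi, aeval_X]; rfl
lemma phi_X1 : phi K (X 1) = X 1 ^ 3 := by rw [phi, aeval_X]; rfl
lemma phi_X2 : phi K (X 2) = X 2 := by rw [phi, aeval_X]; rfl
lemma phi_X3 : phi K (X 3) = X 0 ^ 3 * X 2 := by rw [phi, aeval_X]; rfl
lemma phi_X4 : phi K (X 4) = X 1 ^ 5 * X 2 := by rw [phi, aeval_X]; rfl
lemma phi_X5 : phi K (X 5) = X 0 ^ 3 * X 1 ^ 5 := by rw [phi, aeval_X]; rfl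

/-- Exponent map on exponent vectors induced by `phi`. -/
noncomputable def E (v : Fin 6 →₀ ℕ) : Fin 3 →₀ ℕ :=
  single 0 (2 * v 0 + 3 * v 3 + 3 * v 5) + single 1 (3 * v 1 + 5 * v 4 + 5 * v 5)
    + single 2 (v 2 + v 3 + v 4)

lemma E_apply0 (v : Fin 6 →₀ ℕ) : E v 0 = 2 * v 0 + 3 * v 3 + 3 * v 5 := by
  simp [E, Finsupp.single_apply]
lemma E_apply1 (v : Fin 6 →₀ ℕ) : E v 1 = 3 * v 1 + 5 * v 4 + 5 * v 5 := by
  simp [E, Finsupp.single_apply]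
lemma E_apply2 (v : Fin 6 →₀ ℕ) : E v 2 = v 2 + v 3 + v 4 := by
  simp [E, Finsupp.single_apply]

lemma E_eq {v w : Fin 6 →₀ ℕ}
    (h0 : 2 * v 0 + 3 * v 3 + 3 * v 5 = 2 * w 0 + 3 * w 3 + 3 * w 5)
    (h1 : 3 * v 1 + 5 * v 4 + 5 * v 5 = 3 * w 1 + 5 * w 4 + 5 * w 5)
    (h2 : v 2 + v 3 + v 4 = w 2 + w 3 + w 4) : E v = E w := by
  unfold E; rw [h0, h1, h2]

lemma expand6 (v : Fin 6 →₀ ℕ) (r : K) :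
    (monomial v r : MvPolynomial (Fin 6) K)
      = C r * X 0 ^ v 0 * X 1 ^ v 1 * X 2 ^ v 2 * X 3 ^ v 3 * X 4 ^ v 4 * X 5 ^ v 5 := by
  rw [monomial_eq, Finsupp.prod_fintype _ _ (fun i => pow_zero _), Fin.prod_univ_six]
  ring

lemma expand3 (w : Fin 3 →₀ ℕ) (r : K) :
    (monomial w r : MvPolynomial (Fin 3) K) = C r * X 0 ^ w 0 * X 1 ^ w 1 * X 2 ^ w 2 := by
  rw [monomial_eq, Finsupp.prod_fintype _ _ (fun i => pow_zero _), Fin.prod_univ_three]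
  ring

lemma phi_monomial (v : Fin 6 →₀ ℕ) (r : K) :
    phi K (monomial v r) = monomial (E v) r := by
  rw [expand6, map_mul, map_mul, map_mul, map_mul, map_mul, map_mul, map_pow, map_pow,
    map_pow, map_pow, map_pow, map_pow, phi_C, phi_X0, phi_X1, phi_X2, phi_X3, phi_X4, phi_X5,
    expand3, E_apply0, E_apply1, E_apply2]
  ring

/-- Normal-form predicate on exponent vectors. -/
def Nf (v : Fin 6 →₀ ℕ) : Prop :=
  v 3 ≤ 1 ∧ v 4 ≤ 2 ∧ v 5 ≤ 5 ∧ ¬(1 ≤ v 3 ∧ 1 ≤ v 5) ∧ ¬(2 ≤ v 4 ∧ 1 ≤ v 5) ∧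
    ¬(1 ≤ v 4 ∧ 2 ≤ v 5) ∧ ¬(2 ≤ v 2 ∧ 1 ≤ v 5) ∧ ¬(1 ≤ v 2 ∧ 3 ≤ v 5)

lemma Nf_classify {v : Fin 6 →₀ ℕ} (hv : Nf v) :
    (v 5 = 0 ∧ v 3 ≤ 1 ∧ v 4 ≤ 2) ∨ (v 5 = 1 ∧ v 3 = 0 ∧ v 4 ≤ 1 ∧ v 2 ≤ 1) ∨
      (v 5 = 2 ∧ v 3 = 0 ∧ v 4 = 0 ∧ v 2 ≤ 1) ∨ (v 5 = 3 ∧ v 3 = 0 ∧ v 4 = 0 ∧ v 2 = 0) ∨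
      (v 5 = 4 ∧ v 3 = 0 ∧ v 4 = 0 ∧ v 2 = 0) ∨ (v 5 = 5 ∧ v 3 = 0 ∧ v 4 = 0 ∧ v 2 = 0) := by
  obtain ⟨a1, a2, a3, a4, a5, a6, a7, a8⟩ := hv
  exact classify (v 2) (v 3) (v 4) (v 5) a1 a2 a3
    ((nand_le a4).imp Nat.lt_one_iff.mp Nat.lt_one_iff.mp)
    ((nand_le a5).imp Nat.lt_succ_iff.mp Nat.lt_one_iff.mp)
    ((nand_le a6).imp Nat.lt_one_iff.mp Nat.lt_succ_iff.mp)
    ((nand_le a7).imp Nat.lt_succ_iff.mp Nat.lt_one_iff.mp)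
    ((nand_le a8).imp Nat.lt_one_iff.mp Nat.lt_succ_iff.mp)

lemma E_inj {v w : Fin 6 →₀ ℕ} (hv : Nf v) (hw : Nf w) (h : E v = E w) : v = w := by
  have h0 := DFunLike.congr_fun h 0
  have h1 := DFunLike.congr_fun h 1
  have h2 := DFunLike.congr_fun h 2
  rw [E_apply0, E_apply0] at h0
  rw [E_apply1, E_apply1] at h1
  rw [E_apply2, E_apply2] at h2
  obtain ⟨g0, g1, g2, g3, g4, g5⟩ :=
    nat_inj (v 0) (v 1) (v 2) (v 3) (v 4) (v 5) (w 0) (w 1) (w 2) (w 3) (w 4) (w 5)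
      (Nf_classify hv) (Nf_classify hw) h0 h1 h2
  ext i
  fin_cases i
  · exact g0
  · exact g1
  · exact g2
  · exact g3
  · exact g4
  · exact g5

lemma step {p q : Fin 6 →₀ ℕ}
    (hpq : (monomial p 1 - monomial q 1 : MvPolynomial (Fin 6) K) ∈ S K)
    {v : Fin 6 →₀ ℕ} (hle : p ≤ v) :
    (monomial v 1 - monomial (v - p + q) 1 : MvPolynomial (Fin 6) K) ∈ S K := by
  have h : (monomial v (1 : K) - monomial (v - p + q) 1 : MvPolynomial (Fin 6) K)
      = monomial (v - p) 1 * (monomial p 1 - monomial q 1) := by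
    rw [mul_sub, monomial_mul, monomial_mul, one_mul, tsub_add_cancel_of_le hle]
  rw [h]
  exact Ideal.mul_mem_left _ _ hpq

lemma sub_add_comp (v p q : Fin 6 →₀ ℕ) (i : Fin 6) :
    (v - p + q) i = v i - p i + q i := by
  simp [Finsupp.add_apply, Finsupp.tsub_apply]

lemma E_stepped {p q : Fin 6 →₀ ℕ} (hE : E p = E q) {v : Fin 6 →₀ ℕ} (hle : p ≤ v) :
    E (v - p + q) = E v := by
  have l0 := Finsupp.le_def.mp hle 0
  have l1 := Finsupp.le_def.mp hle 1
  have l2 := Finsupp.le_def.mp hle 2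
  have l3 := Finsupp.le_def.mp hle 3
  have l4 := Finsupp.le_def.mp hle 4
  have l5 := Finsupp.le_def.mp hle 5
  have e0 := DFunLike.congr_fun hE 0
  have e1 := DFunLike.congr_fun hE 1
  have e2 := DFunLike.congr_fun hE 2
  rw [E_apply0, E_apply0] at e0
  rw [E_apply1, E_apply1] at e1
  rw [E_apply2, E_apply2] at e2
  have c0 := sub_add_comp v p q 0
  have c1 := sub_add_comp v p q 1
  have c2 := sub_add_comp v p q 2
  have c3 := sub_add_comp v p q 3
  have c4 := sub_add_comp v p q 4
  have c5 := sub_add_comp v p q 5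
  exact E_eq (by omega) (by omega) (by omega)

lemma pair_le {a b : Fin 6} {m k : ℕ} (hab : a ≠ b) {v : Fin 6 →₀ ℕ}
    (h1 : m ≤ v a) (h2 : k ≤ v b) : single a m + single b k ≤ v := by
  rw [Finsupp.le_def]
  intro i
  rw [Finsupp.add_apply, Finsupp.single_apply, Finsupp.single_apply]
  by_cases ha : a = i <;> by_cases hb : b = i
  · exact absurd (ha.trans hb.symm) hab
  · subst ha; simp [hb]; omega
  · subst hb; simp [ha]; omega
  · simp [ha, hb]

lemma X_mon (n : Fin 6) : (X n : MvPolynomial (Fin 6) K) = monomial (single n 1) 1 := rfl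

lemma g1 : (monomial (single 3 2) 1 - monomial (single 0 3 + single 2 2) 1 :
    MvPolynomial (Fin 6) K) ∈ S K := by
  have h : (monomial (single 3 2) (1:K) - monomial (single 0 3 + single 2 2) 1 :
      MvPolynomial (Fin 6) K) = X 3 ^ 2 - X 0 ^ 3 * X 2 ^ 2 := by
    simp [X_mon, monomial_pow, monomial_mul, Finsupp.smul_single, add_assoc]
  rw [h]; exact Ideal.subset_span (by simp [gens])

lemma g2 : (monomial (single 4 3) 1 - monomial (single 1 5 + single 2 3) 1 :
    MvPolynomial (Fin 6) K) ∈ S K := by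
  have h : (monomial (single 4 3) (1:K) - monomial (single 1 5 + single 2 3) 1 :
      MvPolynomial (Fin 6) K) = X 4 ^ 3 - X 1 ^ 5 * X 2 ^ 3 := by
    simp [X_mon, monomial_pow, monomial_mul, Finsupp.smul_single, add_assoc]
  rw [h]; exact Ideal.subset_span (by simp [gens])

lemma g3 : (monomial (single 5 6) 1 - monomial (single 0 9 + single 1 10) 1 :
    MvPolynomial (Fin 6) K) ∈ S K := by
  have h : (monomial (single 5 6) (1:K) - monomial (single 0 9 + single 1 10) 1 :
      MvPolynomial (Fin 6) K) = X 5 ^ 6 - X 0 ^ 9 * X 1 ^ 10 := by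
    simp [X_mon, monomial_pow, monomial_mul, Finsupp.smul_single, add_assoc]
  rw [h]; exact Ideal.subset_span (by simp [gens])

lemma g4 : (monomial (single 2 2 + single 5 1) 1 - monomial (single 3 1 + single 4 1) 1 :
    MvPolynomial (Fin 6) K) ∈ S K := by
  have h : (monomial (single 2 2 + single 5 1) (1:K) - monomial (single 3 1 + single 4 1) 1 :
      MvPolynomial (Fin 6) K) = X 2 ^ 2 * X 5 - X 3 * X 4 := by
    simp [X_mon, monomial_pow, monomial_mul, Finsupp.smul_single, add_assoc]
  rw [h]; exact Ideal.subset_span (by simp [gens])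

lemma g5 : (monomial (single 3 1 + single 5 1) 1 - monomial (single 0 3 + single 4 1) 1 :
    MvPolynomial (Fin 6) K) ∈ S K := by
  have h : (monomial (single 3 1 + single 5 1) (1:K) - monomial (single 0 3 + single 4 1) 1 :
      MvPolynomial (Fin 6) K) = X 3 * X 5 - X 0 ^ 3 * X 4 := by
    simp [X_mon, monomial_pow, monomial_mul, Finsupp.smul_single, add_assoc]
  rw [h]; exact Ideal.subset_span (by simp [gens])

lemma g6 : (monomial (single 4 1 + single 5 2) 1
      - monomial (single 0 3 + single 1 5 + single 2 1) 1 :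
    MvPolynomial (Fin 6) K) ∈ S K := by
  have h : (monomial (single 4 1 + single 5 2) (1:K)
        - monomial (single 0 3 + single 1 5 + single 2 1) 1 :
      MvPolynomial (Fin 6) K) = X 4 * X 5 ^ 2 - X 0 ^ 3 * X 1 ^ 5 * X 2 := by
    simp [X_mon, monomial_pow, monomial_mul, Finsupp.smul_single, add_assoc]
  rw [h]; exact Ideal.subset_span (by simp [gens])

lemma g7 : (monomial (single 4 2 + single 5 1) 1
      - monomial (single 1 5 + single 2 1 + single 3 1) 1 :
    MvPolynomial (Fin 6) K) ∈ S K := by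
  have h : (monomial (single 4 2 + single 5 1) (1:K)
        - monomial (single 1 5 + single 2 1 + single 3 1) 1 :
      MvPolynomial (Fin 6) K) = X 4 ^ 2 * X 5 - X 1 ^ 5 * X 2 * X 3 := by
    simp [X_mon, monomial_pow, monomial_mul, Finsupp.smul_single, add_assoc]
  rw [h]; exact Ideal.subset_span (by simp [gens])

lemma g8 : (monomial (single 2 1 + single 5 3) 1
      - monomial (single 0 3 + single 1 5 + single 3 1) 1 :
    MvPolynomial (Fin 6) K) ∈ S K := by
  have h : (monomial (single 2 1 + single 5 3) (1:K)
        - monomial (single 0 3 + single 1 5 + single 3 1) 1 :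
      MvPolynomial (Fin 6) K) = X 2 * X 5 ^ 3 - X 0 ^ 3 * X 1 ^ 5 * X 3 := by
    simp [X_mon, monomial_pow, monomial_mul, Finsupp.smul_single, add_assoc]
  rw [h]; exact Ideal.subset_span (by simp [gens])

lemma single_comp (a : Fin 6) (m : ℕ) (i : Fin 6) :
    (single a m : Fin 6 →₀ ℕ) i = if a = i then m else 0 := Finsupp.single_apply

lemma eE : ∀ p q : Fin 6 →₀ ℕ, (∀ i : Fin 3, E p i = E q i) → E p = E q := by
  intro p q h
  exact E_eq (by have := h 0; rwa [E_apply0, E_apply0] at this)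
    (by have := h 1; rwa [E_apply1, E_apply1] at this)
    (by have := h 2; rwa [E_apply2, E_apply2] at this)

/-- Every exponent vector can be rewritten modulo `S` to a normal form with the same image. -/
lemma reduce : ∀ (n : ℕ) (v : Fin 6 →₀ ℕ), 3 * v 5 + v 3 + v 4 ≤ n →
    ∃ w, Nf w ∧ E w = E v ∧
      (monomial v 1 - monomial w 1 : MvPolynomial (Fin 6) K) ∈ S K := by
  intro n
  induction n with
  | zero =>
    intro v hv
    exact ⟨v, by unfold Nf; omega, rfl, by rw [sub_self]; exact (S K).zero_mem⟩
  | succ n ih =>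
    intro v hv
    by_cases hr1 : 2 ≤ v 3
    · have hle : (single 3 2 : Fin 6 →₀ ℕ) ≤ v := Finsupp.single_le_iff.mpr hr1
      have hE : E (single 3 2 : Fin 6 →₀ ℕ) = E (single 0 3 + single 2 2) := by
        apply eE; intro i; fin_cases i <;>
          simp [E_apply0, E_apply1, E_apply2, Finsupp.add_apply, single_comp]
      have hmem := step K (g1 K) hle
      have hEs := E_stepped hE hle
      obtain ⟨w, hN, hWE, hWS⟩ := ih (v - (single 3 2) + (single 0 3 + single 2 2)) (by
        rw [sub_add_comp, sub_add_comp, sub_add_comp]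
        simp [single_comp]
        omega)
      exact ⟨w, hN, hWE.trans hEs, by
        rw [← sub_add_sub_cancel (monomial v (1:K)) _ (monomial w 1)]
        exact Ideal.add_mem _ hmem hWS⟩
    · by_cases hr2 : 3 ≤ v 4
      · have hle : (single 4 3 : Fin 6 →₀ ℕ) ≤ v := Finsupp.single_le_iff.mpr hr2
        have hE : E (single 4 3 : Fin 6 →₀ ℕ) = E (single 1 5 + single 2 3) := by
          apply eE; intro i; fin_cases i <;>
            simp [E_apply0, E_apply1, E_apply2, Finsupp.add_apply, single_comp]
        have hmem := step K (g2 K) hle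
        have hEs := E_stepped hE hle
        obtain ⟨w, hN, hWE, hWS⟩ := ih (v - (single 4 3) + (single 1 5 + single 2 3)) (by
          rw [sub_add_comp, sub_add_comp, sub_add_comp]
          simp [single_comp]
          omega)
        exact ⟨w, hN, hWE.trans hEs, by
          rw [← sub_add_sub_cancel (monomial v (1:K)) _ (monomial w 1)]
          exact Ideal.add_mem _ hmem hWS⟩
      · by_cases hr3 : 1 ≤ v 3 ∧ 1 ≤ v 5
        · have hle : (single 3 1 + single 5 1 : Fin 6 →₀ ℕ) ≤ v := pair_le (by decide) hr3.1 hr3.2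
          have hE : E (single 3 1 + single 5 1 : Fin 6 →₀ ℕ) = E (single 0 3 + single 4 1) := by
            apply eE; intro i; fin_cases i <;>
              simp [E_apply0, E_apply1, E_apply2, Finsupp.add_apply, single_comp]
          have hmem := step K (g5 K) hle
          have hEs := E_stepped hE hle
          obtain ⟨w, hN, hWE, hWS⟩ := ih (v - (single 3 1 + single 5 1) + (single 0 3 + single 4 1)) (by
            rw [sub_add_comp, sub_add_comp, sub_add_comp]
            simp [single_comp]
            omega)
          exact ⟨w, hN, hWE.trans hEs, by
            rw [← sub_add_sub_cancel (monomial v (1:K)) _ (monomial w 1)]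
            exact Ideal.add_mem _ hmem hWS⟩
        · by_cases hr4 : 2 ≤ v 4 ∧ 1 ≤ v 5
          · have hle : (single 4 2 + single 5 1 : Fin 6 →₀ ℕ) ≤ v := pair_le (by decide) hr4.1 hr4.2
            have hE : E (single 4 2 + single 5 1 : Fin 6 →₀ ℕ) = E (single 1 5 + single 2 1 + single 3 1) := by
              apply eE; intro i; fin_cases i <;>
                simp [E_apply0, E_apply1, E_apply2, Finsupp.add_apply, single_comp]
            have hmem := step K (g7 K) hle
            have hEs := E_stepped hE hle
            obtain ⟨w, hN, hWE, hWS⟩ := ih (v - (single 4 2 + single 5 1) + (single 1 5 + single 2 1 + single 3 1)) (by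
              rw [sub_add_comp, sub_add_comp, sub_add_comp]
              simp [single_comp]
              omega)
            exact ⟨w, hN, hWE.trans hEs, by
              rw [← sub_add_sub_cancel (monomial v (1:K)) _ (monomial w 1)]
              exact Ideal.add_mem _ hmem hWS⟩
          · by_cases hr5 : 1 ≤ v 4 ∧ 2 ≤ v 5
            · have hle : (single 4 1 + single 5 2 : Fin 6 →₀ ℕ) ≤ v := pair_le (by decide) hr5.1 hr5.2
              have hE : E (single 4 1 + single 5 2 : Fin 6 →₀ ℕ) = E (single 0 3 + single 1 5 + single 2 1) := by
                apply eE; intro i; fin_cases i <;>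
                  simp [E_apply0, E_apply1, E_apply2, Finsupp.add_apply, single_comp]
              have hmem := step K (g6 K) hle
              have hEs := E_stepped hE hle
              obtain ⟨w, hN, hWE, hWS⟩ := ih (v - (single 4 1 + single 5 2) + (single 0 3 + single 1 5 + single 2 1)) (by
                rw [sub_add_comp, sub_add_comp, sub_add_comp]
                simp [single_comp]
                omega)
              exact ⟨w, hN, hWE.trans hEs, by
                rw [← sub_add_sub_cancel (monomial v (1:K)) _ (monomial w 1)]
                exact Ideal.add_mem _ hmem hWS⟩
            · by_cases hr6 : 2 ≤ v 2 ∧ 1 ≤ v 5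
              · have hle : (single 2 2 + single 5 1 : Fin 6 →₀ ℕ) ≤ v := pair_le (by decide) hr6.1 hr6.2
                have hE : E (single 2 2 + single 5 1 : Fin 6 →₀ ℕ) = E (single 3 1 + single 4 1) := by
                  apply eE; intro i; fin_cases i <;>
                    simp [E_apply0, E_apply1, E_apply2, Finsupp.add_apply, single_comp]
                have hmem := step K (g4 K) hle
                have hEs := E_stepped hE hle
                obtain ⟨w, hN, hWE, hWS⟩ := ih (v - (single 2 2 + single 5 1) + (single 3 1 + single 4 1)) (by
                  rw [sub_add_comp, sub_add_comp, sub_add_comp]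
                  simp [single_comp]
                  omega)
                exact ⟨w, hN, hWE.trans hEs, by
                  rw [← sub_add_sub_cancel (monomial v (1:K)) _ (monomial w 1)]
                  exact Ideal.add_mem _ hmem hWS⟩
              · by_cases hr7 : 1 ≤ v 2 ∧ 3 ≤ v 5
                · have hle : (single 2 1 + single 5 3 : Fin 6 →₀ ℕ) ≤ v := pair_le (by decide) hr7.1 hr7.2
                  have hE : E (single 2 1 + single 5 3 : Fin 6 →₀ ℕ) = E (single 0 3 + single 1 5 + single 3 1) := by
                    apply eE; intro i; fin_cases i <;>
                      simp [E_apply0, E_apply1, E_apply2, Finsupp.add_apply, single_comp]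
                  have hmem := step K (g8 K) hle
                  have hEs := E_stepped hE hle
                  obtain ⟨w, hN, hWE, hWS⟩ := ih (v - (single 2 1 + single 5 3) + (single 0 3 + single 1 5 + single 3 1)) (by
                    rw [sub_add_comp, sub_add_comp, sub_add_comp]
                    simp [single_comp]
                    omega)
                  exact ⟨w, hN, hWE.trans hEs, by
                    rw [← sub_add_sub_cancel (monomial v (1:K)) _ (monomial w 1)]
                    exact Ideal.add_mem _ hmem hWS⟩
                · by_cases hr8 : 6 ≤ v 5
                  · have hle : (single 5 6 : Fin 6 →₀ ℕ) ≤ v := Finsupp.single_le_iff.mpr hr8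
                    have hE : E (single 5 6 : Fin 6 →₀ ℕ) = E (single 0 9 + single 1 10) := by
                      apply eE; intro i; fin_cases i <;>
                        simp [E_apply0, E_apply1, E_apply2, Finsupp.add_apply, single_comp]
                    have hmem := step K (g3 K) hle
                    have hEs := E_stepped hE hle
                    obtain ⟨w, hN, hWE, hWS⟩ := ih (v - (single 5 6) + (single 0 9 + single 1 10)) (by
                      rw [sub_add_comp, sub_add_comp, sub_add_comp]
                      simp [single_comp]
                      omega)
                    exact ⟨w, hN, hWE.trans hEs, by
                      rw [← sub_add_sub_cancel (monomial v (1:K)) _ (monomial w 1)]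
                      exact Ideal.add_mem _ hmem hWS⟩
                  · exact ⟨v, ⟨by omega, by omega, by omega, hr3, hr4, hr5, hr6, hr7⟩, rfl,
                      by rw [sub_self]; exact (S K).zero_mem⟩

lemma span_le_ker : S K ≤ RingHom.ker (phi K) := by
  rw [S, Ideal.span_le]
  intro x hx
  simp only [gens, Set.mem_insert_iff, Set.mem_singleton_iff] at hx
  rcases hx with rfl|rfl|rfl|rfl|rfl|rfl|rfl|rfl <;>
    · rw [SetLike.mem_coe, RingHom.mem_ker]
      simp only [map_sub, map_mul, map_pow, phi_X0, phi_X1, phi_X2, phi_X3, phi_X4, phi_X5]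
      ring

lemma ker_le_span : RingHom.ker (phi K) ≤ S K := by
  intro p hp
  have hred := fun v : Fin 6 →₀ ℕ => reduce K (3 * v 5 + v 3 + v 4) v le_rfl
  choose nf hNf hEf hSf using hred
  set q : MvPolynomial (Fin 6) K := ∑ v ∈ p.support, monomial (nf v) (coeff v p) with hq
  have hpq : p - q ∈ S K := by
    have hps : p - q = ∑ v ∈ p.support,
        (monomial v (coeff v p) - monomial (nf v) (coeff v p)) := by
      rw [Finset.sum_sub_distrib, ← hq]
      congr 1
      exact p.as_sum
    rw [hps]
    apply Ideal.sum_mem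
    intro v _
    have hd : (monomial v (coeff v p) - monomial (nf v) (coeff v p) : MvPolynomial (Fin 6) K)
        = C (coeff v p) * (monomial v 1 - monomial (nf v) 1) := by
      rw [mul_sub, C_mul_monomial, C_mul_monomial, mul_one]
    rw [hd]
    exact Ideal.mul_mem_left _ _ (hSf v)
  have hqker : phi K q = 0 := by
    have h1 : phi K (p - q) = 0 := span_le_ker K hpq
    have h2 : phi K p = 0 := hp
    rw [map_sub, h2, zero_sub, neg_eq_zero] at h1
    exact h1
  have hNq : ∀ w ∈ q.support, Nf w := by
    intro w hw
    have hc : coeff w q ≠ 0 := MvPolynomial.mem_support_iff.mp hw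
    rw [hq, coeff_sum] at hc
    obtain ⟨v, _, hv⟩ := Finset.exists_ne_zero_of_sum_ne_zero hc
    rw [coeff_monomial] at hv
    split_ifs at hv with hnf
    · rw [← hnf]; exact hNf v
    · exact absurd rfl hv
  have hq0 : q = 0 := by
    by_contra hne
    obtain ⟨w0, hw0⟩ := support_nonempty.mpr hne
    have key : coeff (E w0) (phi K q) = coeff w0 q := by
      conv_lhs => rw [q.as_sum, map_sum]
      simp only [phi_monomial]
      rw [coeff_sum, Finset.sum_eq_single w0]
      · rw [coeff_monomial, if_pos rfl]
      · intro w hw hne'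
        rw [coeff_monomial, if_neg]
        intro hEw
        exact hne' (E_inj (hNq w hw) (hNq w0 hw0) hEw)
      · intro h; exact absurd hw0 h
    rw [hqker, coeff_zero] at key
    exact MvPolynomial.mem_support_iff.mp hw0 key.symm
  have : p = p - q := by rw [hq0, sub_zero]
  rw [this]
  exact hpq

theorem main : RingHom.ker (phi K) = S K :=
  le_antisymm (ker_le_span K) (span_le_ker K)

end ToricEightAux

/-- Over a field of characteristic zero, the toric ideal of the parametrization
`x_1 = u_1^2, x_2 = u_2^3, x_3 = u_3, y_1 = u_1^3 u_3, y_2 = u_2^5 u_3,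
y_3 = u_1^3 u_2^5` is generated by eight explicit binomials.
Here the variables of `K[x_1,x_2,x_3,y_1,y_2,y_3]` are `X 0, …, X 5` and those
of `K[u_1,u_2,u_3]` are `X 0, X 1, X 2`. -/
theorem toric_ideal_example_eight_generators
    (K : Type*) [Field K] [CharZero K] :
    RingHom.ker (MvPolynomial.aeval (R := K)
      (![X 0 ^ 2, X 1 ^ 3, X 2, X 0 ^ 3 * X 2, X 1 ^ 5 * X 2, X 0 ^ 3 * X 1 ^ 5] :
        Fin 6 → MvPolynomial (Fin 3) K))
    = Ideal.span
      ({X 3 ^ 2 - X 0 ^ 3 * X 2 ^ 2,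
        X 4 ^ 3 - X 1 ^ 5 * X 2 ^ 3,
        X 5 ^ 6 - X 0 ^ 9 * X 1 ^ 10,
        X 2 ^ 2 * X 5 - X 3 * X 4,
        X 3 * X 5 - X 0 ^ 3 * X 4,
        X 4 * X 5 ^ 2 - X 0 ^ 3 * X 1 ^ 5 * X 2,
        X 4 ^ 2 * X 5 - X 1 ^ 5 * X 2 * X 3,
        X 2 * X 5 ^ 3 - X 0 ^ 3 * X 1 ^ 5 * X 3} :
        Set (MvPolynomial (Fin 6) K)) :=
  ToricEightAux.main K
end

section
/- Let K be an algebraically closed field. The set of points (x_1,x_2,x_3,y_1,y_2,y_3) ∈ K^6 satisfying the four binomial equations y_1^2 − x_1^3x_3^2 = 0, y_2^3 − x_2^5x_3^3 = 0, y_3^6 − x_1^9x_2^{10} = 0, and x_3^2y_3 − y_1y_2 = 0 is exactly the image of the map K^3 → K^6 sending (u_1,u_2,u_3) to (u_1^2, u_2^3, u_3, u_1^3u_3, u_2^5u_3, u_1^3u_2^5). -/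
/-- Over an algebraically closed field `K`, the common zero set in `K^6` of the
four binomials `y_1^2 - x_1^3 x_3^2`, `y_2^3 - x_2^5 x_3^3`,
`y_3^6 - x_1^9 x_2^{10}`, `x_3^2 y_3 - y_1 y_2` is exactly the image of the map
`(u_1, u_2, u_3) ↦ (u_1^2, u_2^3, u_3, u_1^3 u_3, u_2^5 u_3, u_1^3 u_2^5)`. -/
theorem toric_example_zero_set_of_four_binomials
    (K : Type*) [Field K] [IsAlgClosed K]
    (x₁ x₂ x₃ y₁ y₂ y₃ : K) :
    (y₁ ^ 2 - x₁ ^ 3 * x₃ ^ 2 = 0 ∧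
     y₂ ^ 3 - x₂ ^ 5 * x₃ ^ 3 = 0 ∧
     y₃ ^ 6 - x₁ ^ 9 * x₂ ^ 10 = 0 ∧
     x₃ ^ 2 * y₃ - y₁ * y₂ = 0) ↔
    ∃ u₁ u₂ u₃ : K,
      x₁ = u₁ ^ 2 ∧ x₂ = u₂ ^ 3 ∧ x₃ = u₃ ∧
      y₁ = u₁ ^ 3 * u₃ ∧ y₂ = u₂ ^ 5 * u₃ ∧ y₃ = u₁ ^ 3 * u₂ ^ 5 := by
  constructor
  · rintro ⟨h1, h2, h3, h4⟩
    -- choose a square root a of x₁ with y₁ = a^3 x₃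
    obtain ⟨a, ha⟩ := IsAlgClosed.exists_pow_nat_eq x₁ (n := 2) (by norm_num)
    have hy1 : y₁ = a ^ 3 * x₃ ∨ y₁ = (-a) ^ 3 * x₃ := by
      have hx : x₁ ^ 3 = a ^ 6 := by rw [← ha]; ring
      have : (y₁ - a ^ 3 * x₃) * (y₁ + a ^ 3 * x₃) = 0 := by
        linear_combination h1 + x₃ ^ 2 * hx
      rcases mul_eq_zero.1 this with h | h
      · exact Or.inl (by linear_combination h)
      · exact Or.inr (by linear_combination h)
    obtain ⟨u₁, hu1, hy1⟩ : ∃ u₁ : K, x₁ = u₁ ^ 2 ∧ y₁ = u₁ ^ 3 * x₃ := by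
      rcases hy1 with h | h
      · exact ⟨a, ha.symm, h⟩
      · exact ⟨-a, by rw [neg_pow]; simp [ha], h⟩
    -- choose a cube root b of x₂ with y₂ = b^5 x₃
    obtain ⟨b, hb⟩ := IsAlgClosed.exists_pow_nat_eq x₂ (n := 3) (by norm_num)
    obtain ⟨u₂, hu2, hy2⟩ : ∃ u₂ : K, x₂ = u₂ ^ 3 ∧ y₂ = u₂ ^ 5 * x₃ := by
      by_cases hbz : b ^ 5 * x₃ = 0
      · refine ⟨b, hb.symm, ?_⟩
        have : y₂ ^ 3 = 0 := by
          rw [show y₂ ^ 3 = x₂ ^ 5 * x₃ ^ 3 by linear_combination h2, ← hb]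
          linear_combination (b ^ 10 * x₃ ^ 2) * hbz
        rw [hbz, pow_eq_zero_iff (by norm_num : (3:ℕ) ≠ 0)] at *
        exact this
      · set ζ : K := y₂ / (b ^ 5 * x₃) with hζ
        have key : y₂ ^ 3 = (b ^ 5 * x₃) ^ 3 := by
          rw [show (b ^ 5 * x₃) ^ 3 = (b ^ 3) ^ 5 * x₃ ^ 3 by ring, hb]
          linear_combination h2
        have hζ3 : ζ ^ 3 = 1 := by
          rw [hζ, div_pow, key, div_self (pow_ne_zero 3 hbz)]
        refine ⟨ζ ^ 2 * b, ?_, ?_⟩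
        · rw [mul_pow, ← pow_mul]
          rw [show (2 * 3 : ℕ) = 3 * 2 by norm_num, pow_mul, hζ3, one_pow, one_mul, hb]
        · have : (ζ ^ 2 * b) ^ 5 * x₃ = ζ ^ 10 * (b ^ 5 * x₃) := by ring
          rw [this, show (10:ℕ) = 3 * 3 + 1 by norm_num, pow_succ, pow_mul, hζ3, one_pow,
            one_mul, hζ, div_mul_cancel₀ _ hbz]
    -- now split on whether x₃ = 0
    by_cases hx3 : x₃ = 0
    · -- y₃^6 = (u₁^3 u₂^5)^6; adjust by a 6th root of unity
      have h36 : y₃ ^ 6 = (u₁ ^ 3 * u₂ ^ 5) ^ 6 := by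
        rw [show (u₁ ^ 3 * u₂ ^ 5) ^ 6 = (u₁ ^ 2) ^ 9 * (u₂ ^ 3) ^ 10 by ring, ← hu1, ← hu2]
        linear_combination h3
      by_cases huz : u₁ ^ 3 * u₂ ^ 5 = 0
      · refine ⟨u₁, u₂, x₃, hu1, hu2, rfl, hy1, hy2, ?_⟩
        have : y₃ ^ 6 = 0 := by rw [h36, huz]; ring
        rw [pow_eq_zero_iff (by norm_num : (6:ℕ) ≠ 0)] at this
        rw [this, huz]
      · set η : K := y₃ / (u₁ ^ 3 * u₂ ^ 5) with hη
        have hη6 : η ^ 6 = 1 := by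
          rw [hη, div_pow, h36, div_self (pow_ne_zero 6 huz)]
        refine ⟨η ^ 3 * u₁, η ^ 2 * u₂, x₃, ?_, ?_, rfl, ?_, ?_, ?_⟩
        · rw [mul_pow, ← pow_mul, show (3*2:ℕ)=6 by norm_num, hη6, one_mul, hu1]
        · rw [mul_pow, ← pow_mul, show (2*3:ℕ)=6 by norm_num, hη6, one_mul, hu2]
        · rw [hy1, hx3]; ring
        · rw [hy2, hx3]; ring
        · have : (η ^ 3 * u₁) ^ 3 * (η ^ 2 * u₂) ^ 5 = η ^ 18 * (η * (u₁ ^ 3 * u₂ ^ 5)) := by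
            ring
          rw [this, show (18:ℕ) = 6 * 3 by norm_num, pow_mul, hη6, one_pow, one_mul,
            hη, div_mul_cancel₀ _ huz]
    · refine ⟨u₁, u₂, x₃, hu1, hu2, rfl, hy1, hy2, ?_⟩
      have hx3' : x₃ ^ 2 ≠ 0 := pow_ne_zero _ hx3
      have : x₃ ^ 2 * y₃ = x₃ ^ 2 * (u₁ ^ 3 * u₂ ^ 5) := by
        linear_combination h4 + u₂ ^ 5 * x₃ * hy1 + y₁ * hy2
      exact mul_left_cancel₀ hx3' this
  · rintro ⟨u₁, u₂, u₃, h1, h2, h3, h4, h5, h6⟩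
    subst h1 h2 h3 h4 h5 h6
    refine ⟨by ring, by ring, by ring, by ring⟩
end
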